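/- arXiv:2603.23424 — 9 statements merged into one kernel-verified Lean document; each statement's English description precedes it below -/
import Mathlib

section
/- For every integer s ≥ 2 there exists a unique formal power series U over ℚ with constant coefficient 1 satisfying the functional equation U = 1 + X·U^s, and for every integer p ≥ 1 and every n ≥ 0 the coefficient of X^n in U^p equals the Raney number R_{s,p}(n) = (p/(s·n+p))·C(s·n+p, n), where C denotes the binomial coefficient. -/
/-!
The map `U ↦ 1 + X * U ^ s` is a contraction for the `X`-adic valuation, since `U - V` divides
`U ^ s - V ^ s`; hence it has exactly one fixed point, the `X`-adic limit of its iterates.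
Multiplying the functional equation by `U ^ p` gives `U ^ (p + 1) = U ^ p + X * U ^ (p + s)`,
a recursion in `(n, p)` for the coefficients of the powers of `U` that the Raney numbers satisfy
as well.
-/

/-- Raney number `R_{s,p}(n) = (p/(s·n+p))·C(s·n+p, n)` as a rational number. -/
def raneyQ (s p n : ℕ) : ℚ :=
  (p : ℚ) / (s * n + p) * (Nat.choose (s * n + p) n : ℚ)

lemma raneyQ_eq_div_natCast (s p n : ℕ) :
    raneyQ s p n = p / ((s * n + p : ℕ) : ℚ) * (s * n + p).choose n := by
  rw [raneyQ, Nat.cast_add, Nat.cast_mul]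

lemma raneyQ_zero_right (s : ℕ) {p : ℕ} (hp : 0 < p) : raneyQ s p 0 = 1 := by
  simp [raneyQ, hp.ne']

lemma raneyQ_zero_succ (s n : ℕ) : raneyQ s 0 (n + 1) = 0 := by
  simp [raneyQ]

lemma raneyQ_succ_succ {s : ℕ} (hs : 0 < s) (p n : ℕ) :
    raneyQ s (p + 1) (n + 1) = raneyQ s p (n + 1) + raneyQ s (p + s) n := by
  -- with `m = s * (n + 1) + p`, all three terms are rational multiples of `m.choose n`
  set m := s * (n + 1) + p with hm
  have hnm : n ≤ m := by nlinarith
  have hmQ : (m : ℚ) = s * (n + 1) + p := by rw [hm]; push_cast; ring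
  have hm0 : (m : ℚ) ≠ 0 := by positivity
  have hpascal : ((m + 1).choose (n + 1) : ℚ) = (m + 1) * m.choose n / (n + 1) := by
    rw [eq_div_iff (by positivity)]; exact_mod_cast (Nat.add_one_mul_choose_eq m n).symm
  have hright : (m.choose (n + 1) : ℚ) = m.choose n * (m - n) / (n + 1) := by
    rw [eq_div_iff (by positivity), ← Nat.cast_sub hnm]
    exact_mod_cast Nat.choose_succ_right_eq m n
  have h1 : s * (n + 1) + (p + 1) = m + 1 := by omega
  have h2 : s * n + (p + s) = m := by rw [hm]; ring
  simp only [raneyQ_eq_div_natCast, h1, h2, ← hm, hpascal, hright]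
  push_cast
  field_simp
  linear_combination (m.choose n : ℚ) * hmQ

namespace PowerSeries

variable {R : Type*} [CommRing R]

def IsXAdicContraction (T : R⟦X⟧ → R⟦X⟧) : Prop :=
  ∀ n f g, (X : R⟦X⟧) ^ n ∣ f - g → (X : R⟦X⟧) ^ (n + 1) ∣ T f - T g

lemma eq_of_forall_X_pow_dvd_sub {f g : R⟦X⟧} (h : ∀ n, (X : R⟦X⟧) ^ n ∣ f - g) :
    f = g := by
  ext n
  rw [← sub_eq_zero, ← map_sub]
  exact X_pow_dvd_iff.mp (h (n + 1)) n n.lt_succ_self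

namespace IsXAdicContraction

variable {T : R⟦X⟧ → R⟦X⟧}

lemma X_pow_dvd_iterate_sub (hT : IsXAdicContraction T) (f : R⟦X⟧) {k m : ℕ} (hkm : k ≤ m) :
    (X : R⟦X⟧) ^ k ∣ T^[m] f - T^[k] f := by
  induction k generalizing m with
  | zero => simp
  | succ k ih =>
    obtain ⟨m, rfl⟩ := Nat.exists_eq_add_of_le' (Nat.one_le_of_lt hkm)
    simpa only [Function.iterate_succ_apply'] using hT _ _ _ (ih (by omega))

lemma coeff_iterate_eq (hT : IsXAdicContraction T) (f : R⟦X⟧) {n m : ℕ} (hnm : n < m) :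
    coeff n (T^[m] f) = coeff n (T^[n + 1] f) := by
  rw [← sub_eq_zero, ← map_sub]
  exact X_pow_dvd_iff.mp (hT.X_pow_dvd_iterate_sub f hnm) n n.lt_succ_self

lemma eq_of_fixedPoint (hT : IsXAdicContraction T) {f g : R⟦X⟧} (hf : T f = f)
    (hg : T g = g) : f = g := by
  refine eq_of_forall_X_pow_dvd_sub fun n => ?_
  induction n with
  | zero => simp
  | succ n ih => simpa only [hf, hg] using hT n f g ih

lemma exists_fixedPoint (hT : IsXAdicContraction T) : ∃ f : R⟦X⟧, T f = f := by
  set U := mk fun n => coeff n (T^[n + 1] 0)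
  have hU (k : ℕ) : (X : R⟦X⟧) ^ k ∣ U - T^[k] 0 := by
    refine X_pow_dvd_iff.mpr fun n hn => ?_
    rw [map_sub, coeff_mk, hT.coeff_iterate_eq 0 hn, sub_self]
  refine ⟨U, eq_of_forall_X_pow_dvd_sub fun k => ?_⟩
  have hTU : (X : R⟦X⟧) ^ (k + 1) ∣ T U - T^[k + 1] 0 := by
    simpa only [Function.iterate_succ_apply'] using hT k _ _ (hU k)
  exact (pow_dvd_pow X k.le_succ).trans <| by
    simpa only [sub_sub_sub_cancel_right] using dvd_sub hTU (hU (k + 1))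

theorem existsUnique_fixedPoint (hT : IsXAdicContraction T) : ∃! f : R⟦X⟧, T f = f :=
  hT.exists_fixedPoint.elim fun f hf => ⟨f, hf, fun _ hg => hT.eq_of_fixedPoint hg hf⟩

end IsXAdicContraction

lemma isXAdicContraction_one_add_X_mul_pow (s : ℕ) :
    IsXAdicContraction fun f : R⟦X⟧ => 1 + X * f ^ s := by
  intro n f g hfg
  rw [add_sub_add_left_eq_sub, ← mul_sub, pow_succ']
  exact mul_dvd_mul_left X (hfg.trans (sub_dvd_pow_sub_pow f g s))

section FunctionalEquation

variable {s : ℕ} {U : R⟦X⟧}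

lemma coeff_zero_pow_of_eq_one_add_X_mul_pow (hU : U = 1 + X * U ^ s) (p : ℕ) :
    coeff 0 (U ^ p) = 1 := by
  rw [coeff_zero_eq_constantCoeff_apply, map_pow, hU]
  simp

lemma coeff_succ_pow_succ_of_eq_one_add_X_mul_pow (hU : U = 1 + X * U ^ s) (p n : ℕ) :
    coeff (n + 1) (U ^ (p + 1)) = coeff (n + 1) (U ^ p) + coeff n (U ^ (p + s)) := by
  have hpow : U ^ (p + 1) = U ^ p + X * U ^ (p + s) := by
    rw [pow_succ]
    nth_rw 2 [hU]
    ring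
  rw [hpow, map_add, coeff_succ_X_mul]

theorem coeff_pow_eq_raneyQ {s : ℕ} (hs : 0 < s) {U : ℚ⟦X⟧}
    (hU : U = 1 + X * U ^ s) : ∀ n p, 0 < p → coeff n (U ^ p) = raneyQ s p n
  | 0, p, hp => by rw [coeff_zero_pow_of_eq_one_add_X_mul_pow hU, raneyQ_zero_right s hp]
  | n + 1, p, _ => by
    clear ‹0 < p›
    induction p with
    | zero => simp [raneyQ_zero_succ]
    | succ p ih =>
      rw [coeff_succ_pow_succ_of_eq_one_add_X_mul_pow hU, ih,
        coeff_pow_eq_raneyQ hs hU n (p + s) (by omega), raneyQ_succ_succ hs]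

end FunctionalEquation

end PowerSeries

theorem stmt0 (s : ℕ) (hs : 2 ≤ s) :
    (∃! U : PowerSeries ℚ,
        PowerSeries.constantCoeff U = 1 ∧ U = 1 + PowerSeries.X * U ^ s) ∧
    ∀ U : PowerSeries ℚ,
      PowerSeries.constantCoeff U = 1 → U = 1 + PowerSeries.X * U ^ s →
      ∀ p : ℕ, 1 ≤ p → ∀ n : ℕ,
        PowerSeries.coeff n (U ^ p) = raneyQ s p n := by
  obtain ⟨U, hU, hUnique⟩ :=
    (PowerSeries.isXAdicContraction_one_add_X_mul_pow (R := ℚ) s).existsUnique_fixedPoint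
  refine ⟨⟨U, ⟨?_, hU.symm⟩, fun V hV => hUnique V hV.2.symm⟩, ?_⟩
  · simpa using PowerSeries.coeff_zero_pow_of_eq_one_add_X_mul_pow hU.symm 1
  · intro U _ hU p hp n
    exact PowerSeries.coeff_pow_eq_raneyQ (by omega) hU n p hp
end

section
/- For every integer s ≥ 2 and every integer p ≥ 1, the real power series ∑_{n≥0} R_{s,p}(n)·t^n has radius of convergence exactly ζ_c: the series converges for every real t with |t| < ζ_c and diverges for every real t with |t| > ζ_c. -/
/-!
Clearing factorials, `R(n) = p (sn+p-1)! / (n! ((s-1)n+p)!)`, so the ratio `R(n+1)/R(n)` is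
`(sn+p)(sn+p+1)⋯(sn+p+s-1) / ((n+1) · ((s-1)n+p+1)⋯((s-1)n+p+s-1))`:
`s` factors of size `~ s·n` over one of size `~ n` and `s-1` of size `~ (s-1)·n`.
Hence `R(n+1)/R(n) → s^s/(s-1)^(s-1) = ζ_c⁻¹`, and the ratio test applies to `∑ R(n) tⁿ`
on both sides of `|t| = ζ_c`.
-/

/-- Raney number `R_{s,p}(n) = (p/(s·n+p))·C(s·n+p, n)` as a real number. -/
noncomputable def raney (s p n : ℕ) : ℝ :=
  (p : ℝ) / (s * n + p) * (Nat.choose (s * n + p) n : ℝ)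

/-- The analytic threshold `ζ_c = (s-1)^{s-1}/s^s`. -/
noncomputable def zetaC (s : ℕ) : ℝ := ((s : ℝ) - 1) ^ (s - 1) / (s : ℝ) ^ s

open Filter Finset Topology
open scoped Nat

theorem summable_mul_pow_of_tendsto_norm_ratio {𝕜 : Type*} [NormedField 𝕜]
    [CompleteSpace 𝕜] {a : ℕ → 𝕜} {L : ℝ} (ha : ∀ᶠ n in atTop, a n ≠ 0)
    (h : Tendsto (fun n ↦ ‖a (n + 1)‖ / ‖a n‖) atTop (𝓝 L)) {t : 𝕜} (ht : ‖t‖ * L < 1) :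
    Summable (fun n ↦ a n * t ^ n) := by
  obtain ⟨r, htr, hr⟩ := exists_between ht
  refine summable_of_ratio_norm_eventually_le hr ?_
  filter_upwards [ha, (h.const_mul ‖t‖).eventually_lt_const htr] with n han hn
  have hpos : 0 < ‖a n‖ := norm_pos_iff.2 han
  rw [mul_div_assoc', div_lt_iff₀ hpos] at hn
  calc ‖a (n + 1) * t ^ (n + 1)‖ = ‖t‖ * ‖a (n + 1)‖ * ‖t‖ ^ n := by
        rw [norm_mul, norm_pow, pow_succ]; ring
    _ ≤ r * ‖a n‖ * ‖t‖ ^ n := by gcongr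
    _ = r * ‖a n * t ^ n‖ := by rw [norm_mul, norm_pow, mul_assoc]

theorem not_summable_mul_pow_of_tendsto_norm_ratio {𝕜 : Type*} [NormedField 𝕜]
    {a : ℕ → 𝕜} {L : ℝ} (h : Tendsto (fun n ↦ ‖a (n + 1)‖ / ‖a n‖) atTop (𝓝 L)) {t : 𝕜}
    (ht : 1 < ‖t‖ * L) : ¬ Summable (fun n ↦ a n * t ^ n) := by
  have ht0 : t ≠ 0 := by rintro rfl; simp at ht; linarith
  refine not_summable_of_ratio_test_tendsto_gt_one ht ((h.const_mul ‖t‖).congr fun n ↦ ?_)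
  simp only [norm_mul, norm_pow, pow_succ]
  field_simp

theorem tendsto_affine_div_succ (a b : ℝ) :
    Tendsto (fun n : ℕ ↦ (a * n + b) / (n + 1)) atTop (𝓝 a) := by
  have h := (tendsto_one_div_add_atTop_nhds_zero_nat (𝕜 := ℝ)).const_mul (b - a)
  rw [mul_zero] at h
  simpa using (h.const_add a).congr fun n ↦ by field_simp; ring

theorem tendsto_prod_affine_div_succ (a b : ℝ) (k : ℕ) :
    Tendsto (fun n : ℕ ↦ ∏ j ∈ range k, (a * n + (b + j)) / (n + 1)) atTop (𝓝 (a ^ k)) := by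
  simpa using tendsto_finsetProd (range k) fun j _ ↦ tendsto_affine_div_succ a (b + j)

theorem raney_pos {m p : ℕ} (hp : 1 ≤ p) (n : ℕ) : 0 < raney (m + 1) p n := by
  have hchoose := Nat.choose_pos (show n ≤ (m + 1) * n + p by nlinarith)
  unfold raney
  positivity

theorem raney_mul_factorial (m p n : ℕ) :
    raney (m + 1) p n * ((m + 1) * n + p : ℕ) * n ! * (m * n + p)! =
      p * ((m + 1) * n + p)! := by
  have hle : n ≤ (m + 1) * n + p := by nlinarith
  have hsub : (m + 1) * n + p - n = m * n + p := by rw [Nat.succ_mul]; omega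
  rw [raney, Nat.cast_choose ℝ hle, hsub]
  rcases Nat.eq_zero_or_pos ((m + 1) * n + p) with hN | hN
  · have : p = 0 := by omega
    simp [this]
  · have : ((m + 1 : ℝ) * n + p) ≠ 0 := by exact_mod_cast hN.ne'
    push_cast
    field_simp

theorem raney_succ_div (m p n : ℕ) (hp : 1 ≤ p) :
    raney (m + 1) p (n + 1) / raney (m + 1) p n =
      ((m + 1) * n + p).ascFactorial (m + 1) / ((n + 1) * (m * n + p + 1).ascFactorial m) := by
  have h0 := raney_mul_factorial m p n
  have h1 := raney_mul_factorial m p (n + 1)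
  rw [show (m + 1) * (n + 1) + p = (m + 1) * n + p + (m + 1) by ring,
    show m * (n + 1) + p = m * n + p + m by ring, Nat.factorial_succ n,
    ← Nat.factorial_mul_ascFactorial ((m + 1) * n + p),
    ← Nat.factorial_mul_ascFactorial (m * n + p)] at h1
  have hA := congrArg (Nat.cast (R := ℝ)) (Nat.succ_ascFactorial ((m + 1) * n + p) (m + 1))
  rw [div_eq_div_iff (raney_pos hp n).ne' (by positivity)]
  -- with `N = sn+p`, `M = (s-1)n+p`: after multiplying by `N (N+s) n! M!`,
  -- both sides equal `p N! (N+1)⋯(N+s)`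
  refine mul_right_cancel₀ (b := ((m + 1) * n + p : ℝ) * ((m + 1) * n + p + (m + 1)) *
    n ! * (m * n + p)!) (by positivity) ?_
  push_cast at h0 h1 hA ⊢
  linear_combination ((m + 1) * n + p : ℝ) * h1 + p * ((m + 1) * n + p)! * hA -
    ((m + 1) * n + p).ascFactorial (m + 1) * ((m + 1) * n + p + (m + 1)) * h0

theorem zetaC_succ (m : ℕ) : zetaC (m + 1) = (m : ℝ) ^ m / (m + 1 : ℝ) ^ (m + 1) := by
  simp [zetaC]

theorem tendsto_raney_succ_div {m p : ℕ} (hp : 1 ≤ p) :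
    Tendsto (fun n ↦ raney (m + 1) p (n + 1) / raney (m + 1) p n) atTop
      (𝓝 (zetaC (m + 1))⁻¹) := by
  have h := (tendsto_prod_affine_div_succ (m + 1) p (m + 1)).div
    (tendsto_prod_affine_div_succ m (p + 1) m) (by exact_mod_cast Nat.pow_self_pos.ne')
  rw [zetaC_succ, inv_div]
  refine h.congr fun n ↦ ?_
  rw [raney_succ_div m p n hp, Nat.ascFactorial_eq_prod_range, Nat.ascFactorial_eq_prod_range]
  push_cast
  simp only [Pi.div_apply, prod_div_distrib, prod_const, card_range]
  have : 0 < ∏ x ∈ range m, ((m : ℝ) * n + (p + 1 + x)) := by positivity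
  field_simp
  ring_nf

/-- The power series `∑ R_{s,p}(n) t^n` has radius of convergence exactly `ζ_c`:
it converges for `|t| < ζ_c` and diverges for `|t| > ζ_c`. -/
theorem stmt3 (s p : ℕ) (hs : 2 ≤ s) (hp : 1 ≤ p) :
    (∀ t : ℝ, |t| < zetaC s → Summable (fun n : ℕ => raney s p n * t ^ n)) ∧
    (∀ t : ℝ, zetaC s < |t| → ¬ Summable (fun n : ℕ => raney s p n * t ^ n)) := by
  obtain ⟨m, rfl⟩ : ∃ m, s = m + 1 := ⟨s - 1, by omega⟩
  have hζ : 0 < zetaC (m + 1) := by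
    rw [zetaC_succ]
    exact div_pos (by exact_mod_cast Nat.pow_self_pos) (by positivity)
  have hratio : Tendsto (fun n ↦ ‖raney (m + 1) p (n + 1)‖ / ‖raney (m + 1) p n‖) atTop
      (𝓝 (zetaC (m + 1))⁻¹) := by
    simpa [norm_div, abs_of_pos hζ] using (tendsto_raney_succ_div (m := m) hp).norm
  have hne : ∀ᶠ n in atTop, raney (m + 1) p n ≠ 0 := .of_forall fun n ↦ (raney_pos hp n).ne'
  refine ⟨fun t ht ↦ summable_mul_pow_of_tendsto_norm_ratio hne hratio ?_,
    fun t ht ↦ not_summable_mul_pow_of_tendsto_norm_ratio hratio ?_⟩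
  · rwa [Real.norm_eq_abs, ← div_eq_mul_inv, div_lt_one hζ]
  · rwa [Real.norm_eq_abs, ← div_eq_mul_inv, one_lt_div hζ]
end

section
/- Fix integers s ≥ 2 and p ≥ 1. There exists a constant C > 0 such that for every integer m ≥ 1, |R_{s,p}(m)·ζ_c^m·m^{3/2} − A_{s,p}| ≤ C/m, where A_{s,p} = p·M^p/√(2π·s·(s-1)). In particular R_{s,p}(m) = A_{s,p}·ζ_c^{-m}·m^{-3/2}·(1 + O(1/m)) as m → ∞. -/
/-- `M = s/(s-1)`. -/
noncomputable def Mconst (s : ℕ) : ℝ := (s : ℝ) / ((s : ℝ) - 1)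

/-- The amplitude `A_{s,p} = p·M^p/√(2π·s·(s-1))`. -/
noncomputable def Aconst (s p : ℕ) : ℝ :=
  (p : ℝ) * Mconst s ^ p / Real.sqrt (2 * Real.pi * (s : ℝ) * ((s : ℝ) - 1))

/-!
Put `a = s m + p` and `b = a - m = (s-1) m + p`, and write `n! = σ(n) √(2n) (n/e)^n` with
`σ = stirlingSeq`. Then `R_{s,p}(m) ζ_c^m m^{3/2}` is exactly `A_{s,p}` times three correction
factors: `√π σ(a) / (σ(m) σ(b))`, the power ratio `(1 + p/(s m))^a / (1 + p/((s-1) m))^b` that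
remains once `ζ_c^m` has absorbed the exponential growth of `a^a / (m^m b^b)`, and
`((1 + p/(s m)) (1 + p/((s-1) m)))^{-1/2}` from the square roots. Each factor has logarithm
`O(1/m)` uniformly in `m ≥ 1`: the first by `√π ≤ σ(n) ≤ √π e^{1/(12n)}` (Robbins' bound on
`log σ(n) - log σ(n+1)`, telescoped), the second by `q ≤ (c+q) log(1 + q/c) ≤ q + q²/c`.
Finally `|w - 1| ≤ t e^t` whenever `|log w| ≤ t`, so no separate treatment of small `m` is needed.
-/

open Real Stirling Filter Topology
open scoped Nat

namespace Stirling

theorem log_stirlingSeq_le {n : ℕ} (hn : n ≠ 0) :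
    log (stirlingSeq n) ≤ log √π + 1 / (12 * n) := by
  set g : ℕ → ℝ := fun k => log (stirlingSeq (k + 1)) - 1 / (12 * (k + 1 : ℕ))
  have hmono : Monotone g := by
    refine monotone_nat_of_le_succ fun k => ?_
    have hRobbins := log_stirlingSeq_sdiff_le (k + 1)
    have htelescope : (1 : ℝ) / (12 * (k + 1)) - 1 / (12 * (k + 1 + 1)) =
        1 / (12 * (k + 1) * (k + 1 + 1)) := by
      field_simp; ring
    simp only [g]
    push_cast at hRobbins ⊢
    linarith
  have hlim : Tendsto g atTop (𝓝 (log √π - 0)) := by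
    refine ((continuousAt_log (by positivity)).tendsto.comp
      (tendsto_stirlingSeq_sqrt_pi.comp (tendsto_add_atTop_nat 1))).sub ?_
    exact tendsto_const_nhds.div_atTop
      (tendsto_natCast_atTop_atTop.comp (tendsto_add_atTop_nat 1) |>.const_mul_atTop (by norm_num))
  obtain ⟨k, rfl⟩ := Nat.exists_eq_succ_of_ne_zero hn
  have := hmono.ge_of_tendsto hlim k
  simp only [g, sub_zero] at this
  linarith

theorem stirlingSeq_pos {n : ℕ} (hn : n ≠ 0) : 0 < stirlingSeq n :=
  (sqrt_pos.2 pi_pos).trans_le (sqrt_pi_le_stirlingSeq hn)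

theorem abs_log_stirlingSeq_ratio_le {k l : ℕ} (hk : k ≠ 0) (hl : l ≠ 0) :
    |log (√π * stirlingSeq (k + l) / (stirlingSeq k * stirlingSeq l))| ≤
      1 / (12 * k) + 1 / (12 * l) := by
  have hkl : k + l ≠ 0 := by omega
  have hπ : 0 < √π := sqrt_pos.2 pi_pos
  have lower {n : ℕ} (hn : n ≠ 0) : log √π ≤ log (stirlingSeq n) :=
    log_le_log hπ (sqrt_pi_le_stirlingSeq hn)
  have hk' : (1 : ℝ) / (12 * (k + l : ℕ)) ≤ 1 / (12 * k) := by
    gcongr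
    omega
  have hl' : (0 : ℝ) ≤ 1 / (12 * l) := by positivity
  rw [log_div (by positivity [stirlingSeq_pos hkl])
      (by positivity [stirlingSeq_pos hk, stirlingSeq_pos hl]),
    log_mul hπ.ne' (stirlingSeq_pos hkl).ne',
    log_mul (stirlingSeq_pos hk).ne' (stirlingSeq_pos hl).ne', abs_le]
  have := log_stirlingSeq_le hk
  have := log_stirlingSeq_le hl
  have := log_stirlingSeq_le hkl
  have := lower hk
  have := lower hl
  have := lower hkl
  constructor <;> linarith

theorem factorial_eq_stirlingSeq_mul {n : ℕ} (hn : n ≠ 0) :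
    (n ! : ℝ) = stirlingSeq n * √(2 * n) * (n / exp 1) ^ n := by
  rw [stirlingSeq, mul_assoc, div_mul_cancel₀]
  positivity

theorem cast_choose_add_eq_stirlingSeq {k l : ℕ} (hk : k ≠ 0) (hl : l ≠ 0) :
    ((k + l).choose k : ℝ) = √π * stirlingSeq (k + l) / (stirlingSeq k * stirlingSeq l) *
      ((k + l : ℕ) ^ (k + l) / (k ^ k * l ^ l) : ℝ) / √(2 * π * k * l / (k + l : ℕ)) := by
  rw [Nat.cast_choose ℝ (Nat.le_add_right k l), Nat.add_sub_cancel_left,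
    factorial_eq_stirlingSeq_mul (by omega), factorial_eq_stirlingSeq_mul hk,
    factorial_eq_stirlingSeq_mul hl]
  have := stirlingSeq_pos hk
  have := stirlingSeq_pos hl
  have hsqrt : √(2 * π * k * l / (k + l : ℕ)) = √π * √(2 * k) * √(2 * l) / √(2 * (k + l : ℕ)) := by
    rw [← sqrt_mul pi_pos.le, ← sqrt_mul (by positivity), ← sqrt_div (by positivity)]
    congr 1; ring
  rw [hsqrt, div_pow, div_pow, div_pow, pow_add (exp 1)]
  field_simp

end Stirling

theorem le_mul_log_one_add_div {c q : ℝ} (hc : 0 < c) (hq : 0 ≤ q) :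
    q ≤ (c + q) * log (1 + q / c) := by
  have h := one_sub_inv_le_log_of_pos (x := 1 + q / c) (by positivity)
  calc q = (c + q) * (1 - (1 + q / c)⁻¹) := by field_simp; ring
    _ ≤ (c + q) * log (1 + q / c) := by gcongr

theorem mul_log_one_add_div_le {c q : ℝ} (hc : 0 < c) (hq : 0 ≤ q) :
    (c + q) * log (1 + q / c) ≤ q + q ^ 2 / c := by
  have h := log_le_sub_one_of_pos (x := 1 + q / c) (by positivity)
  calc (c + q) * log (1 + q / c) ≤ (c + q) * (q / c) := by gcongr; linarith
    _ = q + q ^ 2 / c := by field_simp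

theorem abs_exp_sub_one_le_mul_exp (x : ℝ) : |exp x - 1| ≤ |x| * exp |x| := by
  rcases le_total 0 x with hx | hx
  · have h := add_one_le_exp (-x)
    rw [exp_neg] at h
    have : exp x - x * exp x ≤ 1 := by
      have := mul_le_mul_of_nonneg_left h (exp_pos x).le
      rw [mul_inv_cancel₀ (exp_pos x).ne'] at this
      linarith
    rw [abs_of_nonneg (by linarith [one_le_exp hx]), abs_of_nonneg hx]
    linarith
  · rw [abs_of_nonpos (by linarith [exp_le_one_iff.2 hx]), abs_of_nonpos hx]
    have := add_one_le_exp x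
    have := one_le_exp (neg_nonneg.2 hx)
    nlinarith

theorem abs_sub_one_le_of_abs_log_le {w t : ℝ} (hw : 0 < w) (h : |log w| ≤ t) :
    |w - 1| ≤ t * exp t := by
  calc |w - 1| = |exp (log w) - 1| := by rw [exp_log hw]
    _ ≤ |log w| * exp |log w| := abs_exp_sub_one_le_mul_exp _
    _ ≤ t * exp t := by gcongr; exact (abs_nonneg _).trans h

theorem rpow_three_halves_sq {x : ℝ} (hx : 0 ≤ x) : (x ^ ((3 : ℝ) / 2)) ^ 2 = x ^ 3 := by
  rw [← rpow_natCast, ← rpow_mul hx]; norm_num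

namespace Raney

variable (s p m : ℕ)

noncomputable def stirlingFactor : ℝ :=
  √π * stirlingSeq (s * m + p) / (stirlingSeq m * stirlingSeq ((s - 1) * m + p))

noncomputable def powerFactor : ℝ :=
  (1 + p / (s * m : ℝ)) ^ (s * m + p) / (1 + p / ((s - 1 : ℝ) * m)) ^ ((s - 1) * m + p)

noncomputable def sqrtFactor : ℝ :=
  (√((1 + p / (s * m : ℝ)) * (1 + p / ((s - 1 : ℝ) * m))))⁻¹

variable {s m}

theorem mul_add_eq_add_sub_one_mul_add (hs : 1 ≤ s) : s * m + p = m + ((s - 1) * m + p) := by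
  obtain ⟨k, rfl⟩ : ∃ k, s = k + 1 := ⟨s - 1, by omega⟩
  simp only [Nat.add_sub_cancel]; ring

theorem pow_div_mul_zetaC_pow (hs : 2 ≤ s) (hm : m ≠ 0) :
    ((s * m + p : ℕ) : ℝ) ^ (s * m + p) /
        ((m : ℝ) ^ m * (((s - 1) * m + p : ℕ) : ℝ) ^ ((s - 1) * m + p)) * zetaC s ^ m =
      Mconst s ^ p * powerFactor s p m := by
  have hS : (1 : ℝ) < s := by exact_mod_cast hs
  have hx : (0 : ℝ) < m := by exact_mod_cast Nat.pos_of_ne_zero hm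
  have hS1 : (s : ℝ) - 1 ≠ 0 := by linarith
  have ha : (1 + p / (s * m : ℝ)) = ((s * m + p : ℕ) : ℝ) / (s * m) := by
    push_cast; field_simp
  have hb : (1 + p / ((s - 1 : ℝ) * m)) = (((s - 1) * m + p : ℕ) : ℝ) / ((s - 1 : ℝ) * m) := by
    rw [Nat.cast_add, Nat.cast_mul, Nat.cast_sub (by omega)]; push_cast
    field_simp
  rw [powerFactor, ha, hb, zetaC, Mconst]
  obtain ⟨k, rfl⟩ : ∃ k, s = k + 1 := ⟨s - 1, by omega⟩
  simp only [Nat.add_sub_cancel, Nat.cast_add, Nat.cast_one, add_sub_cancel_right] at hS1 ⊢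
  simp only [div_pow, mul_pow, pow_add, pow_mul, pow_succ]
  field_simp

theorem div_div_sqrt_mul_rpow (hs : 2 ≤ s) (hm : m ≠ 0) :
    (p : ℝ) / (s * m + p) / √(2 * π * m * ((s - 1) * m + p : ℕ) / (m + ((s - 1) * m + p) : ℕ)) *
      (m : ℝ) ^ ((3 : ℝ) / 2) = p / √(2 * π * s * (s - 1)) * sqrtFactor s p m := by
  have hS1 : (0 : ℝ) < s - 1 := by
    have : (2 : ℝ) ≤ s := by exact_mod_cast hs
    linarith
  have hx : (0 : ℝ) < m := by exact_mod_cast Nat.pos_of_ne_zero hm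
  have hsplit : ((m + ((s - 1) * m + p) : ℕ) : ℝ) = s * m + p := by
    rw [← mul_add_eq_add_sub_one_mul_add p (by omega : 1 ≤ s)]; push_cast; ring
  have hb : (((s - 1) * m + p : ℕ) : ℝ) = (s - 1) * m + p := by
    rw [Nat.cast_add, Nat.cast_mul, Nat.cast_sub (by omega)]; push_cast; ring
  rw [hsplit, hb, sqrtFactor, ← pow_left_inj₀ (by positivity) (by positivity) two_ne_zero]
  simp only [div_pow, mul_pow, inv_pow, rpow_three_halves_sq hx.le]
  rw [sq_sqrt (by positivity), sq_sqrt (by positivity), sq_sqrt (by positivity)]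
  field_simp

theorem raney_mul_zetaC_pow_mul_rpow (hs : 2 ≤ s) (hm : m ≠ 0) :
    raney s p m * zetaC s ^ m * (m : ℝ) ^ ((3 : ℝ) / 2) =
      Aconst s p * (stirlingFactor s p m * powerFactor s p m * sqrtFactor s p m) := by
  have hsplit := mul_add_eq_add_sub_one_mul_add p (m := m) (by omega : 1 ≤ s)
  have hE := pow_div_mul_zetaC_pow p hs hm
  have hS := div_div_sqrt_mul_rpow p hs hm
  rw [hsplit] at hE
  rw [raney, hsplit, cast_choose_add_eq_stirlingSeq hm
      (by have := Nat.mul_pos (by omega : 0 < s - 1) (Nat.pos_of_ne_zero hm); omega),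
    Aconst, stirlingFactor, hsplit]
  calc _ = √π * stirlingSeq (m + ((s - 1) * m + p)) /
          (stirlingSeq m * stirlingSeq ((s - 1) * m + p)) *
        (((m + ((s - 1) * m + p) : ℕ) : ℝ) ^ (m + ((s - 1) * m + p)) /
          ((m : ℝ) ^ m * (((s - 1) * m + p : ℕ) : ℝ) ^ ((s - 1) * m + p)) * zetaC s ^ m) *
        ((p : ℝ) / (s * m + p) /
          √(2 * π * m * ((s - 1) * m + p : ℕ) / (m + ((s - 1) * m + p) : ℕ)) *
          (m : ℝ) ^ ((3 : ℝ) / 2)) := by ring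
    _ = _ := by rw [hE, hS]; ring

theorem stirlingFactor_pos (hs : 2 ≤ s) (hm : m ≠ 0) : 0 < stirlingFactor s p m := by
  have := stirlingSeq_pos hm
  have := stirlingSeq_pos (n := (s - 1) * m + p)
    (by have := Nat.mul_pos (by omega : 0 < s - 1) (Nat.pos_of_ne_zero hm); omega)
  have := stirlingSeq_pos (n := s * m + p) (by positivity)
  rw [stirlingFactor]
  positivity

theorem powerFactor_pos (hs : 1 ≤ s) : 0 < powerFactor s p m := by
  have : (0 : ℝ) ≤ s - 1 := sub_nonneg.2 (by exact_mod_cast hs)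
  rw [powerFactor]
  positivity

theorem sqrtFactor_pos (hs : 1 ≤ s) : 0 < sqrtFactor s p m := by
  have : (0 : ℝ) ≤ s - 1 := sub_nonneg.2 (by exact_mod_cast hs)
  rw [sqrtFactor]
  positivity

theorem abs_log_stirlingFactor_le (hs : 2 ≤ s) (hm : m ≠ 0) :
    |log (stirlingFactor s p m)| ≤ 1 / m := by
  have hmb : m ≤ (s - 1) * m + p := Nat.le_add_right_of_le (Nat.le_mul_of_pos_left m (by omega))
  have hx : (0 : ℝ) < m := by exact_mod_cast Nat.pos_of_ne_zero hm
  rw [stirlingFactor, mul_add_eq_add_sub_one_mul_add p (by omega : 1 ≤ s)]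
  calc _ ≤ 1 / (12 * m) + 1 / (12 * ((s - 1) * m + p : ℕ) : ℝ) :=
        abs_log_stirlingSeq_ratio_le hm (by omega)
    _ ≤ 1 / (12 * m) + 1 / (12 * m) := by gcongr
    _ = 1 / (6 * m) := by ring
    _ ≤ 1 / m := by gcongr; linarith

theorem abs_log_powerFactor_le (hs : 2 ≤ s) (hm : m ≠ 0) :
    |log (powerFactor s p m)| ≤ p ^ 2 / m := by
  have hS : (2 : ℝ) ≤ s := by exact_mod_cast hs
  have hx : (0 : ℝ) < m := by exact_mod_cast Nat.pos_of_ne_zero hm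
  have hc : (0 : ℝ) < s * m := by positivity
  have hd : (0 : ℝ) < (s - 1) * m := mul_pos (by linarith) hx
  have hp : (0 : ℝ) ≤ p := p.cast_nonneg
  have hcm : (p : ℝ) ^ 2 / (s * m) ≤ p ^ 2 / m := by gcongr; nlinarith
  have hdm : (p : ℝ) ^ 2 / ((s - 1) * m) ≤ p ^ 2 / m := by gcongr; nlinarith
  rw [powerFactor, log_div (by positivity) (by positivity), Real.log_pow, Real.log_pow,
    Nat.cast_add (s * m), Nat.cast_mul s, Nat.cast_add, Nat.cast_mul,
    Nat.cast_sub (by omega : 1 ≤ s), Nat.cast_one, abs_le]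
  have := le_mul_log_one_add_div hc hp
  have := mul_log_one_add_div_le hc hp
  have := le_mul_log_one_add_div hd hp
  have := mul_log_one_add_div_le hd hp
  constructor <;> linarith

theorem abs_log_sqrtFactor_le (hs : 2 ≤ s) (hm : m ≠ 0) :
    |log (sqrtFactor s p m)| ≤ p / m := by
  have hS : (2 : ℝ) ≤ s := by exact_mod_cast hs
  have hx : (0 : ℝ) < m := by exact_mod_cast Nat.pos_of_ne_zero hm
  have hc : (0 : ℝ) < s * m := by positivity
  have hd : (0 : ℝ) < (s - 1) * m := mul_pos (by linarith) hx
  have hcm : (p : ℝ) / (s * m) ≤ p / m := by gcongr; nlinarith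
  have hdm : (p : ℝ) / ((s - 1) * m) ≤ p / m := by gcongr; nlinarith
  have hu := log_le_sub_one_of_pos (x := 1 + p / (s * m : ℝ)) (by positivity)
  have hv := log_le_sub_one_of_pos (x := 1 + p / ((s - 1 : ℝ) * m)) (by positivity)
  have hu0 := log_nonneg (x := 1 + p / (s * m : ℝ)) (by simp; positivity)
  have hv0 := log_nonneg (x := 1 + p / ((s - 1 : ℝ) * m)) (by simp; positivity)
  rw [sqrtFactor, log_inv, log_sqrt (by positivity), log_mul (by positivity) (by positivity),
    abs_le]
  constructor <;> linarith

theorem abs_log_factors_le (hs : 2 ≤ s) (hm : m ≠ 0) :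
    |log (stirlingFactor s p m * powerFactor s p m * sqrtFactor s p m)| ≤
      (1 + p ^ 2 + p) / m := by
  have hs1 : 1 ≤ s := by omega
  rw [log_mul (by positivity [stirlingFactor_pos p hs hm, powerFactor_pos p (m := m) hs1])
      (sqrtFactor_pos p hs1).ne',
    log_mul (stirlingFactor_pos p hs hm).ne' (powerFactor_pos p hs1).ne']
  calc _ ≤ |log (stirlingFactor s p m)| + |log (powerFactor s p m)| +
        |log (sqrtFactor s p m)| := abs_add_three _ _ _
    _ ≤ 1 / m + p ^ 2 / m + p / m := by
      gcongr
      exacts [abs_log_stirlingFactor_le p hs hm, abs_log_powerFactor_le p hs hm,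
        abs_log_sqrtFactor_le p hs hm]
    _ = (1 + p ^ 2 + p) / m := by ring

end Raney

/-- Explicit `m^{-3/2}` asymptotics: there is `C > 0` with
`|R_{s,p}(m)·ζ_c^m·m^{3/2} − A_{s,p}| ≤ C/m` for all `m ≥ 1`. -/
theorem stmt4 (s p : ℕ) (hs : 2 ≤ s) (hp : 1 ≤ p) :
    ∃ C : ℝ, 0 < C ∧ ∀ m : ℕ, 1 ≤ m →
      |raney s p m * zetaC s ^ m * (m : ℝ) ^ ((3 : ℝ) / 2) - Aconst s p| ≤ C / m := by
  have hA : 0 < Aconst s p := by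
    have : (1 : ℝ) < s := by exact_mod_cast hs
    have : (0 : ℝ) < p := by exact_mod_cast hp
    have : (0 : ℝ) < s - 1 := by linarith
    rw [Aconst, Mconst]
    positivity
  set K : ℝ := 1 + p ^ 2 + p
  refine ⟨Aconst s p * (K * exp K), by positivity, fun m hm => ?_⟩
  have hm0 : m ≠ 0 := by omega
  have hs1 : 1 ≤ s := by omega
  have hW := mul_pos (mul_pos (Raney.stirlingFactor_pos p hs hm0)
    (Raney.powerFactor_pos p (m := m) hs1)) (Raney.sqrtFactor_pos p (m := m) hs1)
  have hKm : K / m ≤ K := div_le_self (by positivity) (by exact_mod_cast hm)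
  rw [Raney.raney_mul_zetaC_pow_mul_rpow p hs hm0, ← mul_sub_one, abs_mul, abs_of_pos hA,
    mul_div_assoc]
  gcongr
  calc _ ≤ K / m * exp (K / m) :=
        abs_sub_one_le_of_abs_log_le hW (Raney.abs_log_factors_le p hs hm0)
    _ ≤ K / m * exp K := by gcongr
    _ = K * exp K / m := by ring
end

section
/- For every integer s ≥ 2 there exists a constant C_s > 0 such that for all integers p ≥ 1 and m ≥ 1, R_{s,p}(m) ≤ C_s·p·M^p·ζ_c^{-m}·m^{-3/2}. -/
/-!
The top index of a binomial coefficient can be raised cheaply: `C(n+1, m) / C(n, m) =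
(n+1)/(n+1-m) ≤ s/(s-1) = M` as soon as `s m ≤ n + 1`, so `C(sm+p, m) ≤ M^p C(sm, m)`, while
`p/(sm+p) ≤ p/(sm)`. The two-sided Stirling bounds `√(2πn) (n/e)^n ≤ n! ≤ e √n (n/e)^n` give
`C(sm, m) ≤ (e/2π) √M ζ_c^{-m} m^{-1/2}`, and together these yield `C_s = e √M / (2π s)`.
-/

open Real
open scoped Nat

theorem factorial_le_exp_one_mul_sqrt_mul_pow {n : ℕ} (hn : n ≠ 0) :
    (n ! : ℝ) ≤ exp 1 * √n * (n / exp 1) ^ n := by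
  obtain ⟨k, rfl⟩ := Nat.exists_eq_succ_of_ne_zero hn
  have hseq : Stirling.stirlingSeq (k + 1) ≤ exp 1 / √2 := by
    simpa [Stirling.stirlingSeq_one] using Stirling.stirlingSeq'_antitone (Nat.zero_le k)
  have hpos : 0 < √(2 * ((k + 1 : ℕ) : ℝ)) * (((k + 1 : ℕ) : ℝ) / exp 1) ^ (k + 1) := by
    positivity
  rw [Stirling.stirlingSeq, div_le_iff₀ hpos] at hseq
  calc _ ≤ exp 1 / √2 * (√(2 * ((k + 1 : ℕ) : ℝ)) * (((k + 1 : ℕ) : ℝ) / exp 1) ^ (k + 1)) := hseq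
    _ = _ := by rw [sqrt_mul zero_le_two]; field_simp

theorem add_choose_le_stirling {k l : ℕ} (hk : k ≠ 0) (hl : l ≠ 0) :
    ((k + l).choose k : ℝ) ≤
      exp 1 / (2 * π) * √((k + l) / (k * l)) * ((k + l) ^ (k + l) / (k ^ k * l ^ l)) := by
  have hk' : (0 : ℝ) < k := by positivity
  have hl' : (0 : ℝ) < l := by positivity
  rw [Nat.cast_add_choose]
  calc ((k + l)! : ℝ) / (k ! * l !)
      ≤ exp 1 * √(k + l : ℕ) * ((k + l : ℕ) / exp 1) ^ (k + l) /
          (√(2 * π * k) * (k / exp 1) ^ k * (√(2 * π * l) * (l / exp 1) ^ l)) := by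
        gcongr
        · exact factorial_le_exp_one_mul_sqrt_mul_pow (by omega)
        · exact Stirling.le_factorial_stirling k
        · exact Stirling.le_factorial_stirling l
    _ = _ := by
        have hsqrt : √(2 * π * k) * √(2 * π * l) = 2 * π * √(k * l) := by
          rw [← sqrt_mul (by positivity), show 2 * π * k * (2 * π * l) = (2 * π) ^ 2 * (k * l) by
            ring, sqrt_mul (by positivity), sqrt_sq (by positivity)]
        rw [mul_mul_mul_comm, hsqrt, sqrt_div (by positivity)]
        push_cast
        rw [div_pow, div_pow, div_pow, pow_add (exp 1)]
        have := sqrt_pos.2 (mul_pos hk' hl')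
        field_simp

theorem inv_zetaC_succ_pow_eq (t m : ℕ) :
    (zetaC (t + 1))⁻¹ ^ m = ((t + 1) * m : ℝ) ^ ((t + 1) * m) /
      ((m : ℝ) ^ m * (t * m : ℝ) ^ (t * m)) := by
  rcases Nat.eq_zero_or_pos m with rfl | hm
  · simp
  have : (0 : ℝ) < m := by positivity
  rw [zetaC, inv_div, Nat.add_sub_cancel, div_pow, ← pow_mul, ← pow_mul, mul_pow, mul_pow,
    add_one_mul t m, pow_add (m : ℝ)]
  push_cast
  field_simp
  ring

theorem choose_mul_self_le_inv_zetaC_pow {s m : ℕ} (hs : 2 ≤ s) (hm : m ≠ 0) :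
    ((s * m).choose m : ℝ) ≤ exp 1 / (2 * π) * √(Mconst s) * (zetaC s)⁻¹ ^ m / √m := by
  obtain ⟨t, rfl⟩ := Nat.exists_eq_add_of_le' (by omega : 1 ≤ s)
  have ht : (1 : ℝ) ≤ t := by exact_mod_cast (by omega : 1 ≤ t)
  have hm' : (0 : ℝ) < m := by positivity
  have key := add_choose_le_stirling hm (l := t * m) (Nat.mul_ne_zero (by omega) hm)
  rw [show m + t * m = (t + 1) * m by ring] at key
  rw [inv_zetaC_succ_pow_eq]
  push_cast at key ⊢
  refine key.trans_eq ?_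
  have hsqrt : √(((t + 1) * m) / (m * (t * m)) : ℝ) = √(Mconst (t + 1)) / √m := by
    rw [← sqrt_div' _ hm'.le, Mconst]
    congr 1
    push_cast
    rw [add_sub_cancel_right]
    field_simp
  rw [show (m : ℝ) + t * m = (t + 1) * m by ring, hsqrt]
  ring

theorem Mconst_pos {s : ℕ} (hs : 2 ≤ s) : 0 < Mconst s := by
  have : (2 : ℝ) ≤ s := by exact_mod_cast hs
  exact div_pos (by linarith) (by linarith)

theorem choose_succ_le_Mconst_mul {s k n : ℕ} (hs : 2 ≤ s) (h : s * k ≤ n + 1) :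
    ((n + 1).choose k : ℝ) ≤ Mconst s * (n.choose k : ℝ) := by
  have hkn : k < n + 1 := by nlinarith
  have hs1 : (0 : ℝ) < (s : ℝ) - 1 := by
    have : (2 : ℝ) ≤ s := by exact_mod_cast hs
    linarith
  have hgap : (0 : ℝ) < (n + 1 : ℕ) - k := by
    rw [sub_pos]; exact_mod_cast hkn
  have hrec : ((n + 1).choose k : ℝ) * ((n + 1 : ℕ) - k) = n.choose k * (n + 1 : ℕ) := by
    rw [← Nat.cast_sub hkn.le]
    exact_mod_cast (Nat.choose_mul_succ_eq n k).symm
  have hratio : ((n + 1 : ℕ) : ℝ) * ((s : ℝ) - 1) ≤ s * ((n + 1 : ℕ) - k) := by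
    have : (s * k : ℝ) ≤ (n + 1 : ℕ) := by exact_mod_cast h
    nlinarith
  rw [Mconst, div_mul_eq_mul_div, le_div_iff₀ hs1, ← mul_le_mul_iff_of_pos_right hgap]
  nlinarith [mul_le_mul_of_nonneg_left hratio (Nat.cast_nonneg (n.choose k) : (0 : ℝ) ≤ _)]

theorem choose_add_le_Mconst_pow_mul {s k n : ℕ} (hs : 2 ≤ s) (h : s * k ≤ n) (q : ℕ) :
    ((n + q).choose k : ℝ) ≤ Mconst s ^ q * (n.choose k : ℝ) := by
  induction q with
  | zero => simp
  | succ q ih =>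
    calc ((n + q + 1).choose k : ℝ) ≤ Mconst s * ((n + q).choose k : ℝ) :=
          choose_succ_le_Mconst_mul hs (by omega)
      _ ≤ Mconst s * (Mconst s ^ q * (n.choose k : ℝ)) := by
          gcongr
          exact (Mconst_pos hs).le
      _ = Mconst s ^ (q + 1) * (n.choose k : ℝ) := by ring

theorem rpow_neg_three_halves {x : ℝ} (hx : 0 ≤ x) : x ^ (-(3 : ℝ) / 2) = (x * √x)⁻¹ := by
  rw [neg_div, rpow_neg hx, show (3 : ℝ) / 2 = 1 + 1 / 2 by norm_num,
    rpow_add' hx (by norm_num), rpow_one, sqrt_eq_rpow]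

/-- Uniform upper bound: `R_{s,p}(m) ≤ C_s·p·M^p·ζ_c^{-m}·m^{-3/2}` for all
`p ≥ 1` and `m ≥ 1`. -/
theorem stmt5 (s : ℕ) (hs : 2 ≤ s) :
    ∃ C : ℝ, 0 < C ∧ ∀ p m : ℕ, 1 ≤ p → 1 ≤ m →
      raney s p m ≤ C * p * Mconst s ^ p * (zetaC s)⁻¹ ^ m * (m : ℝ) ^ (-(3 : ℝ) / 2) := by
  have hM := Mconst_pos hs
  refine ⟨exp 1 / (2 * π) * √(Mconst s) / s, by positivity, fun p m _ hm => ?_⟩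
  have hm' : (0 : ℝ) < m := by exact_mod_cast hm
  have hsm : (0 : ℝ) < s * m := by positivity
  calc raney s p m ≤ p / (s * m) * ((s * m + p).choose m : ℝ) := by
        unfold raney
        gcongr
        linarith
    _ ≤ p / (s * m) * (Mconst s ^ p * ((s * m).choose m : ℝ)) := by
        gcongr
        exact choose_add_le_Mconst_pow_mul hs le_rfl p
    _ ≤ p / (s * m) * (Mconst s ^ p * (exp 1 / (2 * π) * √(Mconst s) * (zetaC s)⁻¹ ^ m / √m)) := by
        gcongr
        exact choose_mul_self_le_inv_zetaC_pow hs (by omega)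
    _ = _ := by
        rw [rpow_neg_three_halves hm'.le]
        field_simp
end

section
/- Fix an integer s ≥ 2 and a real number ζ with 0 < ζ < ζ_c. There exists a constant C > 0 (depending only on s and ζ) such that for every integer p ≥ 1, the Gram weight satisfies σ_p(ζ) ≤ C·p·M^{2p}. -/
theorem Nat.choose_add_mul_pow_le {R : Type*} [CommSemiring R] [PartialOrder R]
    [IsOrderedRing R] (k n : ℕ) {x y : R} (hx : 0 ≤ x) (hy : 0 ≤ y) :
    ((k + n).choose k : R) * x ^ k * y ^ n ≤ (x + y) ^ (k + n) := by
  rw [add_pow]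
  convert Finset.single_le_sum (f := fun i ↦ x ^ i * y ^ (k + n - i) * ((k + n).choose i : R))
    (fun i _ ↦ by positivity) (Finset.mem_range.2 (by omega : k < k + n + 1)) using 1
  simp only [Nat.add_sub_cancel_left]
  ring

theorem Mconst_pow_mul_inv_zetaC_pow (s p m : ℕ) (hs : 2 ≤ s) :
    Mconst s ^ p * (zetaC s)⁻¹ ^ m = (s : ℝ) ^ (s * m + p) / ((s : ℝ) - 1) ^ ((s - 1) * m + p) := by
  have hs1 : (s : ℝ) - 1 ≠ 0 := by
    have : (2 : ℝ) ≤ s := by exact_mod_cast hs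
    linarith
  rw [Mconst, zetaC, inv_div, div_pow, div_pow, pow_add, pow_add, pow_mul, pow_mul]
  field_simp

theorem choose_mul_add_le (s p m : ℕ) (hs : 2 ≤ s) :
    ((s * m + p).choose m : ℝ) ≤ Mconst s ^ p * (zetaC s)⁻¹ ^ m := by
  have hs1 : (0 : ℝ) < (s : ℝ) - 1 := by
    have : (2 : ℝ) ≤ s := by exact_mod_cast hs
    linarith
  have hexp : m + ((s - 1) * m + p) = s * m + p := by
    obtain ⟨t, rfl⟩ := Nat.exists_eq_add_of_le hs
    simp only [show 2 + t - 1 = t + 1 by omega]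
    ring
  have key := Nat.choose_add_mul_pow_le (R := ℝ) m ((s - 1) * m + p) zero_le_one hs1.le
  rw [hexp, one_pow, mul_one, add_sub_cancel] at key
  rw [Mconst_pow_mul_inv_zetaC_pow s p m hs, le_div_iff₀ (by positivity)]
  exact key

theorem gram_term_eq (s p m : ℕ) (ζ : ℝ) :
    ((p : ℝ) + m * s) ^ 2 / p * raney s p m ^ 2 * ζ ^ (2 * m)
      = p * (((s * m + p).choose m : ℝ) * ζ ^ m) ^ 2 := by
  rcases Nat.eq_zero_or_pos p with rfl | hp
  · simp
  have hden : (s : ℝ) * m + p ≠ 0 := by positivity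
  rw [raney, show (p : ℝ) + m * s = s * m + p by ring]
  field_simp
  ring

theorem gram_term_le (s p m : ℕ) (hs : 2 ≤ s) {ζ : ℝ} (hζ : 0 ≤ ζ) :
    ((p : ℝ) + m * s) ^ 2 / p * raney s p m ^ 2 * ζ ^ (2 * m)
      ≤ p * Mconst s ^ (2 * p) * ((ζ / zetaC s) ^ 2) ^ m := by
  have hchoose : ((s * m + p).choose m : ℝ) * ζ ^ m ≤ Mconst s ^ p * (ζ / zetaC s) ^ m := by
    calc ((s * m + p).choose m : ℝ) * ζ ^ m
        ≤ Mconst s ^ p * (zetaC s)⁻¹ ^ m * ζ ^ m := by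
          gcongr
          exact choose_mul_add_le s p m hs
      _ = Mconst s ^ p * (ζ / zetaC s) ^ m := by rw [div_eq_mul_inv, mul_pow]; ring
  rw [gram_term_eq, mul_assoc]
  gcongr
  calc (((s * m + p).choose m : ℝ) * ζ ^ m) ^ 2
      ≤ (Mconst s ^ p * (ζ / zetaC s) ^ m) ^ 2 := by gcongr
    _ = Mconst s ^ (2 * p) * ((ζ / zetaC s) ^ 2) ^ m := by ring

/-- Subcritical bound on the Gram weights: for fixed `0 < ζ < ζ_c`, there is
`C > 0` with `σ_p(ζ) ≤ C·p·M^{2p}` for every `p ≥ 1`. -/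
theorem stmt10 (s : ℕ) (hs : 2 ≤ s) (ζ : ℝ) (hζ0 : 0 < ζ) (hζ : ζ < zetaC s) :
    ∃ C : ℝ, 0 < C ∧ ∀ p : ℕ, 1 ≤ p →
      (∑' m : ℕ, (((p : ℝ) + m * s) ^ 2 / p) * raney s p m ^ 2 * ζ ^ (2 * m))
        ≤ C * p * Mconst s ^ (2 * p) := by
  set r := (ζ / zetaC s) ^ 2
  have hzetaC : 0 < zetaC s := hζ0.trans hζ
  have hr0 : 0 ≤ r := by positivity
  have hr1 : r < 1 := pow_lt_one₀ (by positivity) ((div_lt_one hzetaC).2 hζ) two_ne_zero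
  refine ⟨(1 - r)⁻¹, inv_pos.2 (sub_pos.2 hr1), fun p _ ↦ ?_⟩
  have hgeom := (hasSum_geometric_of_lt_one hr0 hr1).mul_left (p * Mconst s ^ (2 * p))
  have hle (m : ℕ) := gram_term_le s p m hs hζ0.le
  have hsum := hgeom.summable.of_nonneg_of_le (fun m ↦ by rw [gram_term_eq]; positivity) hle
  calc _ ≤ ∑' m : ℕ, p * Mconst s ^ (2 * p) * r ^ m := hsum.tsum_le_tsum hle hgeom.summable
    _ = (1 - r)⁻¹ * p * Mconst s ^ (2 * p) := by rw [hgeom.tsum_eq]; ring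
end

section
/- Fix an integer s ≥ 2, an integer q with 1 ≤ q ≤ s, and a real number β > 0. For j ∈ ℕ set p_j := q + j·s and a_j := p_j^{-2-2β}. Then the function η ↦ log(1/(1−η²)) · (∑_{j₁,j₂ ∈ ℕ} (1 − η^{|j₁−j₂|})²·a_{j₁}·a_{j₂})^{1/2}, defined for 0 < η < 1 (the double series being summable), tends to 0 as η → 1 from below. -/
open Filter

private lemma aux_one_sub_pow_le (η : ℝ) (h0 : 0 ≤ η) (h1 : η ≤ 1) (d : ℕ) :
    1 - η ^ d ≤ d * (1 - η) := by
  induction d with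
  | zero => simp
  | succ n ih =>
    have hpow : η ^ n ≤ 1 := pow_le_one₀ h0 h1
    have hpn : 0 ≤ η ^ n := pow_nonneg h0 n
    have hs : η ^ (n + 1) = η ^ n * η := pow_succ η n
    push_cast
    nlinarith

private lemma aux_nat_dist_le (j k : ℕ) : Nat.dist j k ≤ j + k := by
  simp only [Nat.dist]; omega

private lemma aux_summable (a : ℕ → ℝ) (han : ∀ j, 0 ≤ a j) (ha : Summable a)
    (η : ℝ) (hη : η ∈ Set.Ioo (0 : ℝ) 1) :
    Summable (fun jk : ℕ × ℕ =>
      (1 - η ^ Nat.dist jk.1 jk.2) ^ 2 * a jk.1 * a jk.2) := by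
  obtain ⟨h0, h1⟩ := hη
  refine Summable.of_nonneg_of_le (fun jk => ?_) (fun jk => ?_)
    (ha.mul_of_nonneg ha han han)
  · exact mul_nonneg (mul_nonneg (sq_nonneg _) (han jk.1)) (han jk.2)
  · have hp1 : η ^ Nat.dist jk.1 jk.2 ≤ 1 := pow_le_one₀ h0.le h1.le
    have hp0 : 0 ≤ η ^ Nat.dist jk.1 jk.2 := pow_nonneg h0.le _
    have h2 : (1 - η ^ Nat.dist jk.1 jk.2) ^ 2 ≤ 1 := by nlinarith
    calc (1 - η ^ Nat.dist jk.1 jk.2) ^ 2 * a jk.1 * a jk.2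
        ≤ 1 * a jk.1 * a jk.2 := by
          apply mul_le_mul_of_nonneg_right _ (han jk.2)
          exact mul_le_mul_of_nonneg_right h2 (han jk.1)
      _ = a jk.1 * a jk.2 := by ring

private lemma aux_tendsto (a : ℕ → ℝ) (han : ∀ j, 0 ≤ a j) (ha : Summable a)
    (hja : Summable (fun j : ℕ => (j : ℝ) * a j)) :
    Tendsto (fun η : ℝ =>
        Real.log (1 / (1 - η ^ 2)) *
          (∑' jk : ℕ × ℕ,
            (1 - η ^ Nat.dist jk.1 jk.2) ^ 2 * a jk.1 * a jk.2) ^ ((1 : ℝ) / 2))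
      (nhdsWithin 1 (Set.Ioo (0 : ℝ) 1)) (nhds 0) := by
  have hjan : ∀ j : ℕ, 0 ≤ (j : ℝ) * a j := fun j =>
    mul_nonneg (Nat.cast_nonneg j) (han j)
  have hCsum : Summable (fun jk : ℕ × ℕ =>
      (((jk.1 : ℝ) + (jk.2 : ℝ)) * (a jk.1 * a jk.2))) := by
    have hC1 := hja.mul_of_nonneg ha hjan han
    have hC2 := ha.mul_of_nonneg hja han hjan
    exact (hC1.add hC2).congr (fun jk => by ring)
  set C : ℝ := ∑' jk : ℕ × ℕ, (((jk.1 : ℝ) + (jk.2 : ℝ)) * (a jk.1 * a jk.2)) with hC_def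
  have hC0 : 0 ≤ C := tsum_nonneg (fun jk =>
    mul_nonneg (by positivity) (mul_nonneg (han jk.1) (han jk.2)))
  -- termwise bound and tsum bound
  have hkey : ∀ η ∈ Set.Ioo (0 : ℝ) 1,
      (∑' jk : ℕ × ℕ, (1 - η ^ Nat.dist jk.1 jk.2) ^ 2 * a jk.1 * a jk.2)
        ≤ (1 - η) * C := by
    intro η hη
    obtain ⟨h0, h1⟩ := hη
    have hFsum := aux_summable a han ha η ⟨h0, h1⟩
    have hGsum := hCsum.mul_left (1 - η)
    have hterm : ∀ jk : ℕ × ℕ,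
        (1 - η ^ Nat.dist jk.1 jk.2) ^ 2 * a jk.1 * a jk.2
          ≤ (1 - η) * (((jk.1 : ℝ) + (jk.2 : ℝ)) * (a jk.1 * a jk.2)) := by
      intro jk
      set d := Nat.dist jk.1 jk.2 with hd_def
      have hp1 : η ^ d ≤ 1 := pow_le_one₀ h0.le h1.le
      have hp0 : 0 ≤ η ^ d := pow_nonneg h0.le _
      have hdle : (d : ℝ) ≤ (jk.1 : ℝ) + (jk.2 : ℝ) := by
        exact_mod_cast aux_nat_dist_le jk.1 jk.2
      have hsq : (1 - η ^ d) ^ 2 ≤ 1 - η ^ d := by nlinarith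
      have h2 : 1 - η ^ d ≤ (d : ℝ) * (1 - η) := aux_one_sub_pow_le η h0.le h1.le d
      have h3 : (d : ℝ) * (1 - η) ≤ ((jk.1 : ℝ) + (jk.2 : ℝ)) * (1 - η) :=
        mul_le_mul_of_nonneg_right hdle (by linarith)
      calc (1 - η ^ d) ^ 2 * a jk.1 * a jk.2
          = (1 - η ^ d) ^ 2 * (a jk.1 * a jk.2) := by ring
        _ ≤ (((jk.1 : ℝ) + (jk.2 : ℝ)) * (1 - η)) * (a jk.1 * a jk.2) := by
            apply mul_le_mul_of_nonneg_right _ (mul_nonneg (han jk.1) (han jk.2))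
            linarith
        _ = (1 - η) * (((jk.1 : ℝ) + (jk.2 : ℝ)) * (a jk.1 * a jk.2)) := by ring
    calc (∑' jk : ℕ × ℕ, (1 - η ^ Nat.dist jk.1 jk.2) ^ 2 * a jk.1 * a jk.2)
        ≤ ∑' jk : ℕ × ℕ, (1 - η) * (((jk.1 : ℝ) + (jk.2 : ℝ)) * (a jk.1 * a jk.2)) :=
          Summable.tsum_le_tsum hterm hFsum hGsum
      _ = (1 - η) * C := tsum_mul_left
  -- upper comparison function
  set g : ℝ → ℝ := fun η => Real.log (1 / (1 - η ^ 2)) * ((1 - η) * C) ^ ((1 : ℝ) / 2)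
    with hg_def
  have hlog_nonneg : ∀ η ∈ Set.Ioo (0 : ℝ) 1, 0 ≤ Real.log (1 / (1 - η ^ 2)) := by
    intro η hη
    obtain ⟨h0, h1⟩ := hη
    have hlt : η ^ 2 < 1 := pow_lt_one₀ h0.le h1 (by norm_num)
    apply Real.log_nonneg
    rw [le_div_iff₀ (by nlinarith [sq_nonneg η])]
    nlinarith [sq_nonneg η]
  -- g tends to 0
  have hsub : Tendsto (fun η : ℝ => 1 - η) (nhdsWithin 1 (Set.Ioo (0 : ℝ) 1))
      (nhdsWithin 0 (Set.Ioi (0 : ℝ))) := by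
    apply tendsto_nhdsWithin_of_tendsto_nhds_of_eventually_within
    · have hc : Continuous (fun η : ℝ => 1 - η) := by continuity
      have : Tendsto (fun η : ℝ => 1 - η) (nhds 1) (nhds 0) := by
        simpa using hc.tendsto 1
      exact this.mono_left nhdsWithin_le_nhds
    · filter_upwards [self_mem_nhdsWithin] with η hη
      exact sub_pos.mpr hη.2
  have hg1 : Tendsto (fun η : ℝ => Real.log (1 - η) * (1 - η) ^ ((1 : ℝ) / 2))
      (nhdsWithin 1 (Set.Ioo (0 : ℝ) 1)) (nhds 0) :=
    (tendsto_log_mul_rpow_nhdsGT_zero (by norm_num)).comp hsub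
  have hg3 : Tendsto (fun η : ℝ => (1 - η) ^ ((1 : ℝ) / 2))
      (nhdsWithin 1 (Set.Ioo (0 : ℝ) 1)) (nhds 0) := by
    have hc : Tendsto (fun x : ℝ => x ^ ((1 : ℝ) / 2)) (nhds 0) (nhds 0) := by
      have := (Real.continuousAt_rpow_const 0 ((1 : ℝ) / 2) (Or.inr (by norm_num))).tendsto
      simpa [Real.zero_rpow (by norm_num : ((1 : ℝ) / 2) ≠ 0)] using this
    exact hc.comp (hsub.mono_right nhdsWithin_le_nhds)
  have hg2 : Tendsto (fun η : ℝ => Real.log (1 + η))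
      (nhdsWithin 1 (Set.Ioo (0 : ℝ) 1)) (nhds (Real.log 2)) := by
    have h12 : Tendsto (fun η : ℝ => 1 + η) (nhds 1) (nhds 2) := by
      have hc : Continuous (fun η : ℝ => 1 + η) := by continuity
      simpa [one_add_one_eq_two] using hc.tendsto 1
    exact ((Real.continuousAt_log (by norm_num)).tendsto.comp h12).mono_left
      nhdsWithin_le_nhds
  have hh : Tendsto (fun η : ℝ =>
      (-(Real.log (1 - η) * (1 - η) ^ ((1 : ℝ) / 2))) * C ^ ((1 : ℝ) / 2)
        + (-(Real.log (1 + η))) * (1 - η) ^ ((1 : ℝ) / 2) * C ^ ((1 : ℝ) / 2))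
      (nhdsWithin 1 (Set.Ioo (0 : ℝ) 1)) (nhds 0) := by
    have t1 : Tendsto (fun η : ℝ =>
        (-(Real.log (1 - η) * (1 - η) ^ ((1 : ℝ) / 2))) * C ^ ((1 : ℝ) / 2))
        (nhdsWithin 1 (Set.Ioo (0 : ℝ) 1)) (nhds 0) := by
      simpa using (hg1.neg.mul_const (C ^ ((1 : ℝ) / 2)))
    have t2 : Tendsto (fun η : ℝ =>
        (-(Real.log (1 + η))) * (1 - η) ^ ((1 : ℝ) / 2) * C ^ ((1 : ℝ) / 2))
        (nhdsWithin 1 (Set.Ioo (0 : ℝ) 1)) (nhds 0) := by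
      simpa using ((hg2.neg.mul hg3).mul_const (C ^ ((1 : ℝ) / 2)))
    simpa using t1.add t2
  have hgg : Tendsto g (nhdsWithin 1 (Set.Ioo (0 : ℝ) 1)) (nhds 0) := by
    apply hh.congr'
    filter_upwards [self_mem_nhdsWithin] with η hη
    obtain ⟨h0, h1⟩ := hη
    have h1η : (0 : ℝ) < 1 - η := by linarith
    have h2η : (0 : ℝ) < 1 + η := by linarith
    have hfac : 1 - η ^ 2 = (1 - η) * (1 + η) := by ring
    have hlog : Real.log (1 / (1 - η ^ 2))
        = -(Real.log (1 - η) + Real.log (1 + η)) := by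
      rw [one_div, Real.log_inv, hfac, Real.log_mul h1η.ne' h2η.ne']
    have hr : ((1 - η) * C) ^ ((1 : ℝ) / 2)
        = (1 - η) ^ ((1 : ℝ) / 2) * C ^ ((1 : ℝ) / 2) := Real.mul_rpow h1η.le hC0
    simp only [hg_def, hlog, hr]
    ring
  -- squeeze
  apply tendsto_of_tendsto_of_tendsto_of_le_of_le' tendsto_const_nhds hgg
  · filter_upwards [self_mem_nhdsWithin] with η hη
    have hF0 : 0 ≤ ∑' jk : ℕ × ℕ,
        (1 - η ^ Nat.dist jk.1 jk.2) ^ 2 * a jk.1 * a jk.2 :=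
      tsum_nonneg (fun jk =>
        mul_nonneg (mul_nonneg (sq_nonneg _) (han jk.1)) (han jk.2))
    exact mul_nonneg (hlog_nonneg η hη) (Real.rpow_nonneg hF0 _)
  · filter_upwards [self_mem_nhdsWithin] with η hη
    apply mul_le_mul_of_nonneg_left _ (hlog_nonneg η hη)
    apply Real.rpow_le_rpow _ (hkey η hη) (by norm_num)
    exact tsum_nonneg (fun jk =>
      mul_nonneg (mul_nonneg (sq_nonneg _) (han jk.1)) (han jk.2))

/-- Removal of the Toeplitz prefactor: with `p_j = q + j·s` and
`a_j = p_j^{-2-2β}`, the double series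
`∑_{j₁,j₂} (1 − η^{|j₁−j₂|})²·a_{j₁}·a_{j₂}` is summable for `0 < η < 1`, and
`log(1/(1−η²)) · (∑_{j₁,j₂} (1 − η^{|j₁−j₂|})²·a_{j₁}·a_{j₂})^{1/2} → 0`
as `η → 1` from below. -/
theorem stmt12 (s q : ℕ) (hs : 2 ≤ s) (hq1 : 1 ≤ q) (hqs : q ≤ s)
    (β : ℝ) (hβ : 0 < β) :
    (∀ η : ℝ, η ∈ Set.Ioo (0 : ℝ) 1 →
      Summable (fun jk : ℕ × ℕ =>
        (1 - η ^ Nat.dist jk.1 jk.2) ^ 2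
          * ((q + jk.1 * s : ℕ) : ℝ) ^ (-2 - 2 * β)
          * ((q + jk.2 * s : ℕ) : ℝ) ^ (-2 - 2 * β))) ∧
    Tendsto (fun η : ℝ =>
        Real.log (1 / (1 - η ^ 2)) *
          (∑' jk : ℕ × ℕ,
            (1 - η ^ Nat.dist jk.1 jk.2) ^ 2
              * ((q + jk.1 * s : ℕ) : ℝ) ^ (-2 - 2 * β)
              * ((q + jk.2 * s : ℕ) : ℝ) ^ (-2 - 2 * β)) ^ ((1 : ℝ) / 2))
      (nhdsWithin 1 (Set.Ioo (0 : ℝ) 1)) (nhds 0) := by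
  set a : ℕ → ℝ := fun j => ((q + j * s : ℕ) : ℝ) ^ (-2 - 2 * β) with ha_def
  have hbase : ∀ j : ℕ, ((j : ℝ) + 1) ≤ ((q + j * s : ℕ) : ℝ) := by
    intro j
    have : j + 1 ≤ q + j * s := by nlinarith
    exact_mod_cast this
  have hbpos : ∀ j : ℕ, (0 : ℝ) < ((q + j * s : ℕ) : ℝ) := by
    intro j
    have := hbase j
    positivity
  have han : ∀ j, 0 ≤ a j := fun j => (Real.rpow_pos_of_pos (hbpos j) _).le
  have hexp : (-2 - 2 * β : ℝ) ≤ 0 := by linarith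
  have ha_le : ∀ j : ℕ, a j ≤ ((j : ℝ) + 1) ^ (-2 - 2 * β) := fun j =>
    Real.rpow_le_rpow_of_nonpos (by positivity) (hbase j) hexp
  have hmaj : ∀ p : ℝ, p < -1 → Summable (fun j : ℕ => ((j : ℝ) + 1) ^ p) := by
    intro p hp
    have h := (Real.summable_nat_rpow (p := p)).mpr hp
    have h2 := (summable_nat_add_iff 1).mpr h
    exact h2.congr (fun n => by push_cast; ring_nf)
  have ha : Summable a :=
    Summable.of_nonneg_of_le han ha_le (hmaj _ (by linarith))
  have hja : Summable (fun j : ℕ => (j : ℝ) * a j) := by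
    apply Summable.of_nonneg_of_le
      (fun j => mul_nonneg (Nat.cast_nonneg j) (han j))
      (fun j => ?_) (hmaj (-1 - 2 * β) (by linarith))
    have hx : (0 : ℝ) < (j : ℝ) + 1 := by positivity
    have h1 : (j : ℝ) * a j ≤ ((j : ℝ) + 1) * ((j : ℝ) + 1) ^ (-2 - 2 * β) :=
      mul_le_mul (by linarith) (ha_le j) (han j) (by linarith)
    have h2 : ((j : ℝ) + 1) * ((j : ℝ) + 1) ^ (-2 - 2 * β)
        = ((j : ℝ) + 1) ^ (-1 - 2 * β) := by
      rw [show (-1 - 2 * β : ℝ) = 1 + (-2 - 2 * β) by ring, Real.rpow_add hx,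
        Real.rpow_one]
    linarith
  exact ⟨fun η hη => aux_summable a han ha η hη, aux_tendsto a han ha hja⟩
end

section
/- Fix integers s ≥ 2 and p ≥ 1. The real power series ∑_{m≥0} R_{s,p}(m)²·u^m has radius of convergence exactly ζ_c²: it converges for |u| < ζ_c² and diverges for |u| > ζ_c². Moreover the sequence m ↦ R_{s,p}(m)²·ζ_c^{2m}·m³ converges to C_{s,p} := p²·s^{2p−1}/(2π·(s−1)^{2p+1}) as m → ∞. -/
/-!
By Stirling's formula, `R_{s,p}(m)² ζ_c^{2m} m³` is, up to the constant `p² (s/(s-1))^{2p}`, the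
product of three factors with explicit limits: a ratio of Stirling sequences (→ `1/π` after
squaring), the rational factor `m² / (2 (s m + p) ((s-1) m + p))` (→ `1/(2 s (s-1))`), and
`((1 + p/(s m))^{s m + p} / (1 + p/((s-1) m))^{(s-1) m + p})²`, where both powers tend to `e^p`.
The limit `C_{s,p}` is positive, so `R_{s,p}(m)² ζ_c^{2m}` is bounded and `R_{s,p}(m)² ζ_c^{2m} m³`
does not tend to `0`; comparison with geometric series then gives the radius `ζ_c²`.
-/

open Filter

open Topology Asymptotics Real Nat Stirling

theorem summable_mul_pow_of_isBigO_one {c : ℕ → ℝ} {ρ u : ℝ}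
    (hc : (fun m ↦ c m * ρ ^ m) =O[atTop] (fun _ ↦ (1 : ℝ))) (hu : |u| < ρ) :
    Summable fun m ↦ c m * u ^ m := by
  have hρ : 0 < ρ := (abs_nonneg u).trans_lt hu
  have hr : |u / ρ| < 1 := by rwa [abs_div, abs_of_pos hρ, div_lt_one hρ]
  refine summable_of_isBigO_nat (summable_geometric_of_abs_lt_one hr) ?_
  refine (hc.mul (isBigO_refl _ atTop)).congr (fun m ↦ ?_) (fun m ↦ one_mul _)
  rw [mul_assoc, ← mul_pow, mul_div_cancel₀ _ hρ.ne']

theorem tendsto_zero_of_tendsto_mul_pow {f : ℕ → ℝ} {L : ℝ} {k : ℕ} (hk : k ≠ 0)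
    (h : Tendsto (fun m ↦ f m * (m : ℝ) ^ k) atTop (𝓝 L)) : Tendsto f atTop (𝓝 0) := by
  have hinv : Tendsto (fun m : ℕ ↦ ((m : ℝ) ^ k)⁻¹) atTop (𝓝 0) :=
    ((tendsto_pow_atTop hk).comp tendsto_natCast_atTop_atTop).inv_tendsto_atTop
  rw [← mul_zero L]
  refine (h.mul hinv).congr' ?_
  filter_upwards [eventually_ne_atTop 0] with m hm
  field_simp

theorem not_summable_mul_pow_of_tendsto {c : ℕ → ℝ} {ρ u L : ℝ} (k : ℕ)
    (h : Tendsto (fun m ↦ c m * ρ ^ m * (m : ℝ) ^ k) atTop (𝓝 L)) (hL : L ≠ 0)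
    (hu : |ρ| < |u|) : ¬ Summable fun m ↦ c m * u ^ m := by
  intro hsum
  have hu0 : u ≠ 0 := abs_pos.mp ((abs_nonneg ρ).trans_lt hu)
  have hr : |ρ / u| < 1 := by rwa [abs_div, div_lt_one (abs_pos.mpr hu0)]
  have h0 := hsum.tendsto_atTop_zero.mul (tendsto_pow_const_mul_const_pow_of_abs_lt_one k hr)
  rw [zero_mul] at h0
  refine hL (tendsto_nhds_unique h (h0.congr fun m ↦ ?_))
  rw [div_pow]
  field_simp

theorem Stirling.factorial_sq_eq_stirlingSeq {n : ℕ} (hn : n ≠ 0) :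
    (n ! : ℝ) ^ 2 = stirlingSeq n ^ 2 * (2 * n) * (n / exp 1) ^ (2 * n) := by
  rw [stirlingSeq, div_pow, mul_pow, sq_sqrt (by positivity), ← pow_mul, mul_comm n 2]
  field_simp

theorem Stirling.stirlingSeq_ne_zero {n : ℕ} (hn : n ≠ 0) : stirlingSeq n ≠ 0 := by
  obtain ⟨m, rfl⟩ := exists_eq_succ_of_ne_zero hn
  exact (stirlingSeq'_pos m).ne'

theorem Stirling.choose_sq_eq_stirlingSeq {a b : ℕ} (ha : a ≠ 0) (hb : b ≠ 0) :
    ((a + b).choose a : ℝ) ^ 2 =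
      (stirlingSeq (a + b) / (stirlingSeq a * stirlingSeq b)) ^ 2 * ((a + b : ℕ) / (2 * a * b)) *
        (((a + b : ℕ) : ℝ) ^ (a + b) / ((a : ℝ) ^ a * (b : ℝ) ^ b)) ^ 2 := by
  rw [Nat.cast_choose ℝ (Nat.le_add_right a b), Nat.add_sub_cancel_left, div_pow, mul_pow,
    factorial_sq_eq_stirlingSeq (by omega), factorial_sq_eq_stirlingSeq ha,
    factorial_sq_eq_stirlingSeq hb]
  have := stirlingSeq_ne_zero ha
  have := stirlingSeq_ne_zero hb
  have := exp_pos 1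
  push_cast
  simp only [div_pow]
  field_simp
  ring

theorem tendsto_one_add_div_pow_mul_add {a : ℕ} (ha : a ≠ 0) (x : ℝ) (p : ℕ) :
    Tendsto (fun n : ℕ ↦ (1 + x / (a * n)) ^ (a * n + p)) atTop (𝓝 (exp x)) := by
  have hmul : Tendsto (fun n : ℕ ↦ a * n) atTop atTop :=
    tendsto_id.const_mul_atTop' (Nat.pos_of_ne_zero ha)
  have hbase : Tendsto (fun n : ℕ ↦ 1 + x / (a * n : ℕ)) atTop (𝓝 1) := by
    simpa using ((tendsto_const_div_atTop_nhds_zero_nat x).comp hmul).const_add 1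
  have := ((tendsto_one_add_div_pow_exp x).comp hmul).mul (hbase.pow p)
  rw [one_pow, mul_one] at this
  refine this.congr fun n ↦ ?_
  simp [pow_add]

theorem raney_sq_mul_zetaC_pow_mul_pow_three {q : ℕ} (hq : q ≠ 0) (p : ℕ) {n : ℕ} (hn : n ≠ 0) :
    raney (q + 1) p n ^ 2 * zetaC (q + 1) ^ (2 * n) * (n : ℝ) ^ 3 =
      (p : ℝ) ^ 2 * (stirlingSeq ((q + 1) * n + p) / (stirlingSeq n * stirlingSeq (q * n + p))) ^ 2
        * (n ^ 2 / (((q + 1) * n + p) * (q * n + p)) / 2)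
        * ((1 + p / ((q + 1) * n)) ^ ((q + 1) * n + p) / (1 + p / (q * n)) ^ (q * n + p)) ^ 2
        * (((q + 1) / q) ^ p) ^ 2 := by
  have hsplit : (q + 1) * n + p = n + (q * n + p) := by ring
  have hpow (x y : ℝ) (hx : x ≠ 0) (k : ℕ) : (x + y) ^ k = x ^ k * (1 + y / x) ^ k := by
    rw [← mul_pow, mul_add, mul_one, mul_div_cancel₀ _ hx]
  have hchoose := choose_sq_eq_stirlingSeq hn (b := q * n + p) (by positivity)
  rw [← hsplit] at hchoose
  rw [raney, mul_pow, hchoose, zetaC, Nat.add_sub_cancel]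
  push_cast
  rw [add_sub_cancel_right, hpow (((q : ℝ) + 1) * n) p (by positivity),
    hpow ((q : ℝ) * n) p (by positivity)]
  have := stirlingSeq_ne_zero hn
  have := stirlingSeq_ne_zero (n := q * n + p) (by positivity)
  have : (q : ℝ) ≠ 0 := by exact_mod_cast hq
  have hS : (q : ℝ) + 1 ≠ 0 := by positivity
  -- keeps `field_simp` from expanding `(q + 1) ^ (q + 1)`
  generalize (q : ℝ) + 1 = S at hS ⊢
  simp only [div_pow, mul_pow]
  field_simp
  ring

theorem tendsto_sq_div_mul_add_mul_add {a b : ℝ} (ha : a ≠ 0) (hb : b ≠ 0) (c d : ℝ) :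
    Tendsto (fun n : ℕ ↦ (n : ℝ) ^ 2 / ((a * n + c) * (b * n + d))) atTop (𝓝 (a * b)⁻¹) := by
  have hc := (tendsto_const_div_atTop_nhds_zero_nat c).const_add a
  have hd := (tendsto_const_div_atTop_nhds_zero_nat d).const_add b
  rw [add_zero] at hc hd
  refine ((hc.mul hd).inv₀ (mul_ne_zero ha hb)).congr' ?_
  filter_upwards [eventually_ne_atTop 0] with n hn
  field_simp

theorem tendsto_raney_sq_mul_zetaC_pow_mul_pow_three {s : ℕ} (hs : 2 ≤ s) (p : ℕ) :
    Tendsto (fun n : ℕ ↦ raney s p n ^ 2 * zetaC s ^ (2 * n) * (n : ℝ) ^ 3) atTop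
      (𝓝 ((p : ℝ) ^ 2 * (s : ℝ) ^ (2 * p - 1) / (2 * π * ((s : ℝ) - 1) ^ (2 * p + 1)))) := by
  obtain ⟨q, rfl⟩ : ∃ q, s = q + 1 := ⟨s - 1, by omega⟩
  have hq : q ≠ 0 := by omega
  have hlin {a : ℕ} (ha : a ≠ 0) : Tendsto (fun n : ℕ ↦ a * n + p) atTop atTop :=
    tendsto_atTop_mono (fun n ↦ Nat.le_add_right _ p)
      (tendsto_id.const_mul_atTop' (Nat.pos_of_ne_zero ha))
  have hstirling := ((tendsto_stirlingSeq_sqrt_pi.comp (hlin q.succ_ne_zero)).div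
      (tendsto_stirlingSeq_sqrt_pi.mul (tendsto_stirlingSeq_sqrt_pi.comp (hlin hq)))
      (by positivity)).pow 2
  have hrational := (tendsto_sq_div_mul_add_mul_add (a := (q : ℝ) + 1) (b := q) (by positivity)
    (by exact_mod_cast hq) p p).div_const 2
  have hexp := ((tendsto_one_add_div_pow_mul_add q.succ_ne_zero p p).div
    (tendsto_one_add_div_pow_mul_add hq p p) (exp_pos _).ne').pow 2
  have hlim := (((hstirling.const_mul ((p : ℝ) ^ 2)).mul hrational).mul hexp).mul_const
    (((((q : ℝ) + 1) / q) ^ p) ^ 2)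
  convert hlim.congr' ?_ using 2
  · rw [div_self (exp_pos _).ne', div_mul_cancel_left₀ (sqrt_ne_zero'.2 pi_pos), inv_pow,
      sq_sqrt pi_pos.le]
    rcases p with _ | r
    · simp
    · have : (q : ℝ) ≠ 0 := by exact_mod_cast hq
      rw [show 2 * (r + 1) - 1 = 2 * r + 1 by omega]
      push_cast
      simp only [div_pow]
      field_simp
      ring
  · filter_upwards [eventually_ne_atTop 0] with n hn
    rw [raney_sq_mul_zetaC_pow_mul_pow_three hq p hn]
    push_cast
    rfl

/-- The series `∑ R_{s,p}(m)²·u^m` has radius of convergence exactly `ζ_c²`,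
and `R_{s,p}(m)²·ζ_c^{2m}·m³ → C_{s,p} = p²·s^{2p−1}/(2π·(s−1)^{2p+1})`. -/
theorem stmt16 (s p : ℕ) (hs : 2 ≤ s) (hp : 1 ≤ p) :
    (∀ u : ℝ, |u| < zetaC s ^ 2 →
        Summable (fun m : ℕ => raney s p m ^ 2 * u ^ m)) ∧
    (∀ u : ℝ, zetaC s ^ 2 < |u| →
        ¬ Summable (fun m : ℕ => raney s p m ^ 2 * u ^ m)) ∧
    Tendsto (fun m : ℕ => raney s p m ^ 2 * zetaC s ^ (2 * m) * (m : ℝ) ^ 3)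
      atTop
      (nhds ((p : ℝ) ^ 2 * (s : ℝ) ^ (2 * p - 1)
        / (2 * Real.pi * ((s : ℝ) - 1) ^ (2 * p + 1)))) := by
  set C : ℝ := (p : ℝ) ^ 2 * (s : ℝ) ^ (2 * p - 1) / (2 * π * ((s : ℝ) - 1) ^ (2 * p + 1))
  have hlim : Tendsto (fun m : ℕ ↦ raney s p m ^ 2 * zetaC s ^ (2 * m) * (m : ℝ) ^ 3) atTop (𝓝 C) :=
    tendsto_raney_sq_mul_zetaC_pow_mul_pow_three hs p
  have hlim_sq : Tendsto (fun m : ℕ ↦ raney s p m ^ 2 * (zetaC s ^ 2) ^ m * (m : ℝ) ^ 3) atTop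
      (𝓝 C) := by
    simpa only [pow_mul] using hlim
  have hC : C ≠ 0 := by
    have hs1 : (s : ℝ) - 1 ≠ 0 := by
      rw [sub_ne_zero]
      exact_mod_cast (by omega : s ≠ 1)
    have hp0 : (p : ℝ) ≠ 0 := by exact_mod_cast (by omega : p ≠ 0)
    positivity
  refine ⟨fun u hu ↦ summable_mul_pow_of_isBigO_one ?_ hu,
    fun u hu ↦ not_summable_mul_pow_of_tendsto 3 hlim_sq hC ?_, hlim⟩
  · exact (tendsto_zero_of_tendsto_mul_pow three_ne_zero hlim_sq).isBigO_one ℝ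
  · rwa [abs_of_nonneg (sq_nonneg _)]
end

section
/- Fix an integer s ≥ 2, a real r > 0, and a real ζ with 0 < ζ < 1/(s−1). Define f : ℂ∖{0} → ℂ by f(w) = r·(w + ζ·w^{1−s}) (where w^{1−s} = w⁻¹^{s−1}). Then f is injective on the closed exterior region {w ∈ ℂ : 1 ≤ |w|}; that is, for all w₁, w₂ with |w₁| ≥ 1 and |w₂| ≥ 1, f(w₁) = f(w₂) implies w₁ = w₂. -/
/-- Norm bound: for ‖x‖ ≤ 1, ‖y‖ ≤ 1, ‖x^n - y^n‖ ≤ n * ‖x - y‖. -/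
lemma aux_pow_sub_pow (x y : ℂ) (hx : ‖x‖ ≤ 1) (hy : ‖y‖ ≤ 1) (n : ℕ) :
    ‖x ^ n - y ^ n‖ ≤ n * ‖x - y‖ := by
  rw [← geom_sum₂_mul x y n, norm_mul]
  have h : ‖∑ i ∈ Finset.range n, x ^ i * y ^ (n - 1 - i)‖ ≤ n := by
    calc ‖∑ i ∈ Finset.range n, x ^ i * y ^ (n - 1 - i)‖
        ≤ ∑ i ∈ Finset.range n, ‖x ^ i * y ^ (n - 1 - i)‖ := norm_sum_le _ _
      _ ≤ ∑ i ∈ Finset.range n, 1 := by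
          refine Finset.sum_le_sum fun i _ => ?_
          rw [norm_mul, norm_pow, norm_pow]
          exact mul_le_one₀ (pow_le_one₀ (norm_nonneg _) hx) (by positivity)
            (pow_le_one₀ (norm_nonneg _) hy)
      _ = n := by simp
  exact mul_le_mul_of_nonneg_right h (norm_nonneg _)

/-- Below the geometric threshold `ζ < 1/(s−1)`, the map
`f(w) = r·(w + ζ·w^{1−s})` is injective on the closed exterior region
`{w : 1 ≤ |w|}`. -/
theorem stmt18 (s : ℕ) (hs : 2 ≤ s) (r ζ : ℝ) (hr : 0 < r) (hζ0 : 0 < ζ)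
    (hζ : ζ < 1 / ((s : ℝ) - 1)) :
    ∀ w₁ w₂ : ℂ, 1 ≤ ‖w₁‖ → 1 ≤ ‖w₂‖ →
      (r : ℂ) * (w₁ + (ζ : ℂ) * w₁ ^ ((1 : ℤ) - (s : ℤ)))
        = (r : ℂ) * (w₂ + (ζ : ℂ) * w₂ ^ ((1 : ℤ) - (s : ℤ))) →
      w₁ = w₂ := by
  intro w₁ w₂ h1 h2 hf
  have hw₁ : w₁ ≠ 0 := by intro h; rw [h] at h1; simp at h1; linarith
  have hw₂ : w₂ ≠ 0 := by intro h; rw [h] at h2; simp at h2; linarith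
  have hs1 : (0:ℝ) < (s:ℝ) - 1 := by
    have : (2:ℝ) ≤ s := by exact_mod_cast hs
    linarith
  -- rewrite zpow as pow of inverse
  have hzp : ∀ w : ℂ, w ≠ 0 → w ^ ((1 : ℤ) - (s : ℤ)) = (w⁻¹) ^ (s - 1) := by
    intro w hw
    have h1s : (1 : ℤ) - (s : ℤ) = -((s - 1 : ℕ) : ℤ) := by
      have : (1:ℕ) ≤ s := by omega
      push_cast [Nat.cast_sub this]; ring
    rw [h1s, zpow_neg, zpow_natCast, ← inv_pow]
  -- cancel r
  have hr' : (r : ℂ) ≠ 0 := by exact_mod_cast hr.ne'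
  have hkey : w₁ - w₂ = -((ζ : ℂ) * ((w₁⁻¹) ^ (s-1) - (w₂⁻¹) ^ (s-1))) := by
    have := mul_left_cancel₀ hr' hf
    rw [hzp w₁ hw₁, hzp w₂ hw₂] at this
    linear_combination this
  -- norm estimates
  have hx : ‖w₁⁻¹‖ ≤ 1 := by rw [norm_inv]; exact inv_le_one_of_one_le₀ h1
  have hy : ‖w₂⁻¹‖ ≤ 1 := by rw [norm_inv]; exact inv_le_one_of_one_le₀ h2
  have hinvd : ‖w₁⁻¹ - w₂⁻¹‖ ≤ ‖w₁ - w₂‖ := by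
    have : w₁⁻¹ - w₂⁻¹ = (w₂ - w₁) * (w₁⁻¹ * w₂⁻¹) := by
      field_simp
    rw [this, norm_mul, norm_mul, norm_inv, norm_inv]
    calc ‖w₂ - w₁‖ * (‖w₁‖⁻¹ * ‖w₂‖⁻¹)
        ≤ ‖w₂ - w₁‖ * 1 := by
          refine mul_le_mul_of_nonneg_left ?_ (norm_nonneg _)
          have := mul_le_one₀ (inv_le_one_of_one_le₀ h1) (by positivity)
            (inv_le_one_of_one_le₀ h2)
          exact this
      _ = ‖w₁ - w₂‖ := by rw [mul_one, norm_sub_rev]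
  have hbound : ‖w₁ - w₂‖ ≤ ζ * ((s:ℝ) - 1) * ‖w₁ - w₂‖ := by
    calc ‖w₁ - w₂‖ = ζ * ‖(w₁⁻¹) ^ (s-1) - (w₂⁻¹) ^ (s-1)‖ := by
          rw [hkey, norm_neg, norm_mul, Complex.norm_real,
            Real.norm_of_nonneg hζ0.le]
      _ ≤ ζ * ((s - 1 : ℕ) * ‖w₁⁻¹ - w₂⁻¹‖) := by
          exact mul_le_mul_of_nonneg_left (aux_pow_sub_pow _ _ hx hy _) hζ0.le
      _ ≤ ζ * ((s - 1 : ℕ) * ‖w₁ - w₂‖) := by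
          refine mul_le_mul_of_nonneg_left ?_ hζ0.le
          exact mul_le_mul_of_nonneg_left hinvd (by positivity)
      _ = ζ * ((s:ℝ) - 1) * ‖w₁ - w₂‖ := by
          have : (1:ℕ) ≤ s := by omega
          push_cast [Nat.cast_sub this]; ring
  have hlt : ζ * ((s:ℝ) - 1) < 1 := by
    rw [lt_div_iff₀ hs1] at hζ
    linarith
  by_contra hne
  have hpos : 0 < ‖w₁ - w₂‖ := by
    rw [norm_pos_iff]; exact sub_ne_zero_of_ne hne
  nlinarith
end

section
/- Fix an integer s ≥ 2, a real r > 0, and a real ζ with ζ > 1/(s−1). Define f : ℂ∖{0} → ℂ by f(w) = r·(w + ζ·w^{1−s}) (where w^{1−s} = w⁻¹^{s−1}). Then f is not injective on the open exterior disk {w ∈ ℂ : |w| > 1}: there exist w₁ ≠ w₂ with |w₁| > 1, |w₂| > 1 and f(w₁) = f(w₂). -/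
/-- Strict Bernoulli inequality for reals: `(1+a)^n > 1 + n*a` for `a > 0`, `n ≥ 2`. -/
lemma bernoulli_strict (a : ℝ) (ha : 0 < a) : ∀ n : ℕ, 2 ≤ n → 1 + (n : ℝ) * a < (1 + a) ^ n := by
  intro n hn
  induction n with
  | zero => omega
  | succ m ih =>
    rcases Nat.lt_or_ge m 2 with hm | hm
    · interval_cases m
      · omega
      · push_cast; nlinarith
    · have h := ih hm
      have h1 : (0:ℝ) < 1 + a := by linarith
      have hm0 : (0:ℝ) < (m:ℝ) := by exact_mod_cast Nat.lt_of_lt_of_le two_pos hm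
      have hp : (1 + (m:ℝ) * a) * (1 + a) < (1 + a) ^ m * (1 + a) :=
        mul_lt_mul_of_pos_right h h1
      have hpow : (1 + a) ^ (m + 1) = (1 + a) ^ m * (1 + a) := by ring
      rw [hpow]
      push_cast
      nlinarith [hp, mul_pos (mul_pos hm0 ha) ha]

lemma real_noninj (s : ℕ) (hs : 2 ≤ s) (ζ : ℝ)
    (hζ : 1 / ((s : ℝ) - 1) < ζ) :
    ∃ x₁ x₂ : ℝ, x₁ ≠ x₂ ∧ 1 < x₁ ∧ 1 < x₂ ∧
      x₁ + ζ * x₁ ^ ((1 : ℤ) - (s : ℤ)) = x₂ + ζ * x₂ ^ ((1 : ℤ) - (s : ℤ)) := by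
  have hs1 : (0:ℝ) < (s:ℝ) - 1 := by
    have : (2:ℝ) ≤ (s:ℝ) := by exact_mod_cast hs
    linarith
  have hζ0 : 0 < ζ := lt_trans (by positivity) hζ
  set c : ℝ := ζ * ((s:ℝ) - 1) with hc_def
  have hc : 1 < c := by
    rw [div_lt_iff₀ hs1] at hζ
    linarith [hζ]
  have hc0 : (0:ℝ) < c := lt_trans one_pos hc
  set t : ℝ := c ^ ((s:ℝ)⁻¹) with ht_def
  have ht1 : 1 < t := by
    rw [ht_def]
    rw [Real.one_lt_rpow_iff_of_pos hc0]
    left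
    exact ⟨hc, by positivity⟩
  have ht0 : 0 < t := lt_trans one_pos ht1
  have hts : t ^ s = c := by
    rw [ht_def, ← Real.rpow_natCast (c ^ ((s:ℝ)⁻¹)) s, ← Real.rpow_mul hc0.le]
    rw [inv_mul_cancel₀ (by positivity : (s:ℝ) ≠ 0), Real.rpow_one]
  -- define g
  set g : ℝ → ℝ := fun x => x + ζ * x ^ ((1 : ℤ) - (s : ℤ)) with hg_def
  have hgval : ∀ x : ℝ, 0 < x → g x = x + ζ * x / x ^ s := by
    intro x hx
    have hxne : x ≠ 0 := ne_of_gt hx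
    have : x ^ ((1 : ℤ) - (s : ℤ)) = x / x ^ s := by
      rw [zpow_sub₀ hxne, zpow_one, zpow_natCast]
    rw [hg_def]
    simp only [this]
    ring
  -- g(t) = t * s / (s - 1)
  have hgt : g t = t * s / ((s:ℝ) - 1) := by
    rw [hgval t ht0, hts]
    field_simp
    ring
  -- g 1 = 1 + ζ
  have hg1 : g 1 = 1 + ζ := by
    rw [hgval 1 one_pos]
    simp
  -- key inequality g t < g 1  via Bernoulli
  have hkey : g t < g 1 := by
    rw [hgt, hg1]
    rw [div_lt_iff₀ hs1]
    have hber := bernoulli_strict (t - 1) (by linarith) s hs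
    rw [show (1 : ℝ) + (t - 1) = t by ring] at hber
    rw [hts] at hber
    -- 1 + s*(t-1) < c, need t*s < (1+ζ)*(s-1) = (s-1) + c
    have : (1 + ζ) * ((s:ℝ) - 1) = ((s:ℝ) - 1) + c := by rw [hc_def]; ring
    rw [this]
    nlinarith [hber]
  -- continuity of g on sets of positives
  have hcont : ∀ a b : ℝ, 0 < a → ContinuousOn g (Set.Icc a b) := by
    intro a b ha
    apply ContinuousOn.add continuousOn_id
    apply ContinuousOn.mul continuousOn_const
    apply ContinuousOn.zpow₀ continuousOn_id
    intro x hx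
    exact Or.inl (ne_of_gt (lt_of_lt_of_le ha hx.1))
  clear_value g t c
  -- choose v strictly between g t and g 1
  obtain ⟨v, hv1, hv2⟩ : ∃ v, g t < v ∧ v < g 1 :=
    ⟨(g t + g 1) / 2, by constructor <;> linarith⟩
  -- first point: x₁ ∈ [1, t] with g x₁ = v (IVT, decreasing direction)
  obtain ⟨x₁, hx₁mem, hx₁val⟩ : ∃ x ∈ Set.Icc (1:ℝ) t, g x = v := by
    have := intermediate_value_Icc' (le_of_lt ht1) (hcont 1 t one_pos)
    have hv : v ∈ Set.Icc (g t) (g 1) := ⟨hv1.le, hv2.le⟩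
    obtain ⟨x, hx, hgx⟩ := this hv
    exact ⟨x, hx, hgx⟩
  have hx₁1 : 1 < x₁ := by
    rcases eq_or_lt_of_le hx₁mem.1 with h | h
    · exfalso; rw [← h] at hx₁val; rw [hx₁val] at hv2; exact lt_irrefl _ hv2
    · exact h
  -- second point: x₂ ∈ [t, M] with g x₂ = v where M = max t v
  have htM : t ≤ max t v := le_max_left _ _
  set M : ℝ := max t v with hM_def
  have hgM : v ≤ g M := by
    have hM0 : 0 < M := lt_of_lt_of_le ht0 htM
    rw [hgval M hM0]
    have h1 : v ≤ M := le_max_right _ _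
    have h2 : 0 < ζ * M / M ^ s := by positivity
    linarith
  obtain ⟨x₂, hx₂mem, hx₂val⟩ : ∃ x ∈ Set.Icc t M, g x = v := by
    have := intermediate_value_Icc htM (hcont t M ht0)
    exact this ⟨hv1.le, hgM⟩
  have hx₂t : t < x₂ := by
    rcases eq_or_lt_of_le hx₂mem.1 with h | h
    · exfalso; rw [← h] at hx₂val; rw [hx₂val] at hv1; exact lt_irrefl _ hv1
    · exact h
  refine ⟨x₁, x₂, ?_, hx₁1, lt_trans ht1 hx₂t, ?_⟩
  · exact ne_of_lt (lt_of_le_of_lt hx₁mem.2 hx₂t)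
  · have hgg : g x₁ = g x₂ := by rw [hx₁val, hx₂val]
    rw [hg_def] at hgg
    simpa using hgg

/-- Above the geometric threshold `ζ > 1/(s−1)`, the map
`f(w) = r·(w + ζ·w^{1−s})` is not injective on the open exterior disk
`{w : |w| > 1}`. -/
theorem stmt19 (s : ℕ) (hs : 2 ≤ s) (r ζ : ℝ) (hr : 0 < r)
    (hζ : 1 / ((s : ℝ) - 1) < ζ) :
    ∃ w₁ w₂ : ℂ, w₁ ≠ w₂ ∧ 1 < ‖w₁‖ ∧ 1 < ‖w₂‖ ∧
      (r : ℂ) * (w₁ + (ζ : ℂ) * w₁ ^ ((1 : ℤ) - (s : ℤ)))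
        = (r : ℂ) * (w₂ + (ζ : ℂ) * w₂ ^ ((1 : ℤ) - (s : ℤ))) := by
  obtain ⟨x₁, x₂, hne, hx₁, hx₂, heq⟩ := real_noninj s hs ζ hζ
  refine ⟨(x₁ : ℂ), (x₂ : ℂ), ?_, ?_, ?_, ?_⟩
  · exact_mod_cast hne
  · simpa [Complex.norm_real, Real.norm_eq_abs, abs_of_pos (by linarith : (0:ℝ) < x₁)] using hx₁
  · simpa [Complex.norm_real, Real.norm_eq_abs, abs_of_pos (by linarith : (0:ℝ) < x₂)] using hx₂
  · have h2 : ((x₁ + ζ * x₁ ^ ((1 : ℤ) - (s : ℤ)) : ℝ) : ℂ)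
        = ((x₂ + ζ * x₂ ^ ((1 : ℤ) - (s : ℤ)) : ℝ) : ℂ) := congrArg _ heq
    simp only [Complex.ofReal_add, Complex.ofReal_mul, Complex.ofReal_zpow] at h2
    rw [h2]
end
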